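/- arXiv:2511.19358 — 10 statements merged into one kernel-verified Lean document; each statement's English description precedes it below -/
import Mathlib

section
/- Let f : 2^A → ℝ≥0 be an XOS function on a finite set A (i.e., f(S) = max over a finite collection of additive functions a_ℓ of a_ℓ(S), with f(S) ≥ a_ℓ(S) for all ℓ, S). Let A be partitioned into disjoint sets A_1, ..., A_n, and for S ⊆ A write S_i = S ∩ A_i and S_{-i} = S \ A_i. Then for every S ⊆ A and every subset N' ⊆ {1,...,n}: ∑_{i ∈ N'} (f(S) − f(S_{-i})) ≤ f(⋃_{i ∈ N'} S_i). -/
open Finset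

/-!
Fix `S` and an additive function `w` attaining `f S`. Since `w` lies below `f` everywhere, removing
the part `S_i` lowers `f` by at most `w(S_i)`. Summing over `i ∈ N'`, the parts `S_i` are disjoint,
so the total is `w(⋃_{i ∈ N'} S_i) ≤ f(⋃_{i ∈ N'} S_i)`.
-/

section SupportingAdditive

variable {V ι : Type*} {f : Finset V → ℝ} {w : V → ℝ} {S : Finset V}

theorem sub_le_sum_filter_of_supporting (p : V → Prop) [DecidablePred p]
    (hS : f S = ∑ j ∈ S, w j)
    (hle : ∑ j ∈ S.filter (fun j => ¬ p j), w j ≤ f (S.filter (fun j => ¬ p j))) :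
    f S - f (S.filter (fun j => ¬ p j)) ≤ ∑ j ∈ S.filter p, w j := by
  rw [hS, ← sum_filter_add_sum_filter_not S p]
  linarith

theorem sum_sub_filter_ne_le_of_supporting [DecidableEq ι] (ag : V → ι) (N' : Finset ι)
    (hS : f S = ∑ j ∈ S, w j) (hle : ∀ T : Finset V, ∑ j ∈ T, w j ≤ f T) :
    ∑ i ∈ N', (f S - f (S.filter (fun j => ag j ≠ i))) ≤ f (S.filter (fun j => ag j ∈ N')) :=
  calc ∑ i ∈ N', (f S - f (S.filter (fun j => ag j ≠ i)))
      ≤ ∑ i ∈ N', ∑ j ∈ S.filter (fun j => ag j = i), w j :=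
        sum_le_sum fun i _ => sub_le_sum_filter_of_supporting (fun j => ag j = i) hS (hle _)
    _ = ∑ j ∈ S.filter (fun j => ag j ∈ N'), w j := sum_fiberwise_eq_sum_filter S N' ag w
    _ ≤ f (S.filter (fun j => ag j ∈ N')) := hle _

end SupportingAdditive

theorem xos_marginal_sum_le_general (n k : ℕ) (V : Type*)
    (ag : V → Fin n) (f : Finset V → ℝ) (w : Fin k → V → ℝ)
    (hmax : ∀ S : Finset V, ∃ l : Fin k, f S = ∑ j ∈ S, w l j)
    (hub : ∀ (S : Finset V) (l : Fin k), ∑ j ∈ S, w l j ≤ f S) :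
    ∀ (S : Finset V) (N' : Finset (Fin n)),
      ∑ i ∈ N', (f S - f (S.filter (fun j => ag j ≠ i)))
        ≤ f (S.filter (fun j => ag j ∈ N')) := by
  intro S N'
  obtain ⟨l, hl⟩ := hmax S
  exact sum_sub_filter_ne_le_of_supporting ag N' hl (hub · l)

/-- For an XOS function `f` (pointwise max of finitely many
nonnegative additive functions) on a finite ground set `V` partitioned into
agents' action sets via `ag`, for every `S` and every set of agents `N'`,
`∑_{i ∈ N'} (f(S) − f(S_{-i})) ≤ f(⋃_{i ∈ N'} S_i)`. -/
theorem xos_marginal_sum_le (n k : ℕ) (V : Type*) [Fintype V] [DecidableEq V]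
    (ag : V → Fin n) (f : Finset V → ℝ) (w : Fin k → V → ℝ)
    (hw : ∀ (l : Fin k) (j : V), 0 ≤ w l j)
    (hmax : ∀ S : Finset V, ∃ l : Fin k, f S = ∑ j ∈ S, w l j)
    (hub : ∀ (S : Finset V) (l : Fin k), ∑ j ∈ S, w l j ≤ f S) :
    ∀ (S : Finset V) (N' : Finset (Fin n)),
      ∑ i ∈ N', (f S - f (S.filter (fun j => ag j ≠ i)))
        ≤ f (S.filter (fun j => ag j ∈ N')) :=
  xos_marginal_sum_le_general n k V ag f w hmax hub
end

section
/- In a multi-agent contract game with finite action set A partitioned into A_1,...,A_n, reward f : 2^A → ℝ≥0, additive costs c : A → ℝ≥0, and contract α ∈ [0,1]^n, define agent i's utility u_i(S) = α_i · f(S) − ∑_{j ∈ S_i} c_j and the potential Φ(S) = f(S) − ∑_i (∑_{j ∈ S_i} c_j)/α_i (with c/0 := ∞ for c > 0 and 0/0 := 0). Then Φ is a weighted potential: for every agent i, every S_{-i} ⊆ A \ A_i, and every pair S_i, S'_i ⊆ A_i with α_i > 0, u_i(S_i ∪ S_{-i}) − u_i(S'_i ∪ S_{-i}) = α_i · (Φ(S_i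 ∪ S_{-i}) − Φ(S'_i ∪ S_{-i})). -/
open Finset

/-!
Dividing each agent's cost by its share turns the cost term of `Φ` into the single sum
`∑ j ∈ S, c j / α (ag j)` over the chosen actions. This is additive over the disjoint union
`S_i ∪ S_{-i}`, so in a difference of potentials with `S_{-i}` fixed only agent `i`'s term
`c(S_i) / α_i` survives, and multiplying by `α_i` gives the difference of its utilities.
-/

namespace Finset

variable {ι κ R : Type*} [DivisionSemiring R]

theorem sum_fiberwise_div [Fintype κ] [DecidableEq κ] (s : Finset ι) (g : ι → κ) (c : ι → R)
    (w : κ → R) :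
    ∑ k, (∑ j ∈ s with g j = k, c j) / w k = ∑ j ∈ s, c j / w (g j) := by
  rw [← sum_fiberwise s g fun j => c j / w (g j)]
  refine sum_congr rfl fun k _ => ?_
  rw [sum_div]
  exact sum_congr rfl fun j hj => by rw [(mem_filter.1 hj).2]

theorem sum_div_comp_of_forall_eq {s : Finset ι} {g : ι → κ} {k : κ} (h : ∀ j ∈ s, g j = k)
    (c : ι → R) (w : κ → R) : ∑ j ∈ s, c j / w (g j) = (∑ j ∈ s, c j) / w k := by
  rw [sum_div]
  exact sum_congr rfl fun j hj => by rw [h j hj]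

end Finset

theorem weighted_potential_general (n : ℕ) (V : Type*) [DecidableEq V]
    (ag : V → Fin n) (f : Finset V → ℝ)
    (c : V → ℝ)
    (α : Fin n → ℝ)
    (Φ : Finset V → ℝ)
    (hΦ : ∀ S : Finset V,
      Φ S = f S - ∑ i : Fin n, (∑ j ∈ S.filter (fun j => ag j = i), c j) / α i)
    (i : Fin n) (hi : 0 < α i)
    (Sm : Finset V) (hSm : ∀ j ∈ Sm, ag j ≠ i)
    (Si Si' : Finset V) (hSi : ∀ j ∈ Si, ag j = i) (hSi' : ∀ j ∈ Si', ag j = i) :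
    (α i * f (Si ∪ Sm) - ∑ j ∈ Si, c j) - (α i * f (Si' ∪ Sm) - ∑ j ∈ Si', c j)
      = α i * (Φ (Si ∪ Sm) - Φ (Si' ∪ Sm)) := by
  have potential_eq : ∀ T : Finset V, (∀ j ∈ T, ag j = i) →
      Φ (T ∪ Sm) = f (T ∪ Sm) - (∑ j ∈ T, c j) / α i - ∑ j ∈ Sm, c j / α (ag j) := by
    intro T hT
    have hdisj : Disjoint T Sm := disjoint_left.2 fun j hjT hjS => hSm j hjS (hT j hjT)
    rw [hΦ, sum_fiberwise_div, sum_union hdisj, sum_div_comp_of_forall_eq hT]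
    ring
  rw [potential_eq Si hSi, potential_eq Si' hSi']
  field_simp
  ring

/-- `Φ(S) = f(S) − ∑_i c(S_i)/α_i` is a weighted potential: for any agent `i`
with `α_i > 0`, any profile `S_{-i}` of the other agents, and any two strategies
`S_i, S'_i ⊆ A_i`, the difference in agent `i`'s utilities equals `α_i` times the
difference in potentials.  (Division is real division; the paper's convention
`0/0 = 0` is Lean's convention, and terms with `α_j = 0` cancel in the difference.) -/
theorem weighted_potential (n : ℕ) (V : Type*) [Fintype V] [DecidableEq V]
    (ag : V → Fin n) (f : Finset V → ℝ)
    (hnn : ∀ S : Finset V, 0 ≤ f S)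
    (c : V → ℝ) (hc : ∀ j, 0 ≤ c j)
    (α : Fin n → ℝ) (hα : ∀ i, 0 ≤ α i ∧ α i ≤ 1)
    (Φ : Finset V → ℝ)
    (hΦ : ∀ S : Finset V,
      Φ S = f S - ∑ i : Fin n, (∑ j ∈ S.filter (fun j => ag j = i), c j) / α i)
    (i : Fin n) (hi : 0 < α i)
    (Sm : Finset V) (hSm : ∀ j ∈ Sm, ag j ≠ i)
    (Si Si' : Finset V) (hSi : ∀ j ∈ Si, ag j = i) (hSi' : ∀ j ∈ Si', ag j = i) :
    (α i * f (Si ∪ Sm) - ∑ j ∈ Si, c j) - (α i * f (Si' ∪ Sm) - ∑ j ∈ Si', c j)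
      = α i * (Φ (Si ∪ Sm) - Φ (Si' ∪ Sm)) :=
  weighted_potential_general n V ag f c α Φ hΦ i hi Sm hSm Si Si' hSi hSi'
end

section
/- Scaling-for-Existence Lemma: Let f be XOS on finite A partitioned into A_1,...,A_n, with additive costs c_j ≥ 0, contract α ∈ [0,1]^n, and let D be a distribution over subsets of A that is dropout-stable with respect to α (for every agent i, E_{S∼D}[α_i f(S) − c(S_i)] ≥ E_{S∼D}[α_i f(S_{-i})]). For any N' ⊆ {1,...,n} and γ > 1, define α' by α'_i = γ α_i for i ∈ N' and α'_i = 0 otherwise. Then there exists a pure Nash equilibrium S' with respect to α' satisfying f(S') ≥ (1 − 1/γ) · E_{S∼D}[f(⋃_{i ∈ N'} S_i)]. -/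
open Finset

/-!
For a contract `β ≥ 0`, an agent `i` with `β i > 0` gains from a deviation exactly `β i` times
the gain in `Φ(S) = f(S) - ∑_{j ∈ S} c_j / β_{ag j}`, and an agent with `β i = 0` is only allowed
free elements; so a maximiser `S'` of `Φ` is a pure Nash equilibrium for `β = α'`.
Dropout stability bounds the expected cost of agent `i` by `α_i` times its expected marginal
contribution `E[f(S) - f(S_{-i})]`, and for XOS `f` the marginal contributions of the agents in
`N'` add up to at most `f(S_{N'})`. Hence `E[∑_{j ∈ S_{N'}} c_j / α'_{ag j}] ≤ E[f(S_{N'})] / γ`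
and `f(S') ≥ Φ(S') ≥ E[Φ(S_{N'})] ≥ (1 - 1/γ) E[f(S_{N'})]`; here `S_{N'}` competes with `S'`
because dropout stability forces agents with `α_i = 0` to take only free elements.
-/

lemma sum_mul_le_of_forall_ne_zero {X : Type*} {s : Finset X} {D g : X → ℝ} {M : ℝ}
    (hD : ∀ x ∈ s, 0 ≤ D x) (hDsum : ∑ x ∈ s, D x = 1) (hg : ∀ x ∈ s, D x ≠ 0 → g x ≤ M) :
    ∑ x ∈ s, D x * g x ≤ M :=
  calc ∑ x ∈ s, D x * g x ≤ ∑ x ∈ s, D x * M := sum_le_sum fun x hx => by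
        rcases eq_or_ne (D x) 0 with h | h
        · rw [h, zero_mul, zero_mul]
        · exact mul_le_mul_of_nonneg_left (hg x hx h) (hD x hx)
    _ = M := by rw [← sum_mul, hDsum, one_mul]

section ContractGame

variable {ι V : Type*}

noncomputable def potential (ag : V → ι) (f : Finset V → ℝ) (c : V → ℝ) (β : ι → ℝ)
    (S : Finset V) : ℝ :=
  f S - ∑ j ∈ S, c j / β (ag j)

/-- Since `c j / 0 = 0`, `potential` ignores the cost of an element whose agent is paid nothing,
so such an element must be free. -/
noncomputable def affordable [Fintype V] (ag : V → ι) (c : V → ℝ) (β : ι → ℝ) : Finset V :=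
  univ.filter (fun j => β (ag j) ≠ 0 ∨ c j = 0)

def IsPureNash [Fintype V] [DecidableEq V] [DecidableEq ι] (ag : V → ι) (f : Finset V → ℝ)
    (c : V → ℝ) (β : ι → ℝ) (S : Finset V) : Prop :=
  ∀ i, ∀ T ⊆ univ.filter (fun j => ag j = i),
    β i * f (S.filter (fun j => ag j ≠ i) ∪ S.filter (fun j => ag j = i))
        - ∑ j ∈ S.filter (fun j => ag j = i), c j
      ≥ β i * f (S.filter (fun j => ag j ≠ i) ∪ T) - ∑ j ∈ T, c j

section PotentialGame

variable {ag : V → ι} {f : Finset V → ℝ} {c : V → ℝ} {β : ι → ℝ} [DecidableEq V]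

lemma potential_union_of_agent_eq {B T : Finset V} {i : ι} (hB : ∀ j ∈ B, ag j ≠ i)
    (hT : ∀ j ∈ T, ag j = i) :
    potential ag f c β (B ∪ T)
      = f (B ∪ T) - ∑ j ∈ B, c j / β (ag j) - (∑ j ∈ T, c j) / β i := by
  have hdisj : Disjoint B T := disjoint_left.mpr fun j hjB hjT => hB j hjB (hT j hjT)
  rw [potential, sum_union hdisj, sum_div, sub_sub]
  congr 2
  exact sum_congr rfl fun j hj => by rw [hT j hj]

variable [Fintype V] [DecidableEq ι]

theorem isPureNash_of_forall_potential_le (hβ : ∀ i, 0 ≤ β i) (hc : ∀ j, 0 ≤ c j)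
    {S : Finset V} (hS : S ⊆ affordable ag c β)
    (hmax : ∀ T ⊆ affordable ag c β, potential ag f c β T ≤ potential ag f c β S) :
    IsPureNash ag f c β S := by
  intro i T hT
  set B := S.filter (fun j => ag j ≠ i)
  set Si := S.filter (fun j => ag j = i)
  have hB : ∀ j ∈ B, ag j ≠ i := fun j hj => (mem_filter.mp hj).2
  have hSi : ∀ j ∈ Si, ag j = i := fun j hj => (mem_filter.mp hj).2
  have hTi : ∀ j ∈ T, ag j = i := fun j hj => (mem_filter.mp (hT hj)).2
  have hTc : 0 ≤ ∑ j ∈ T, c j := sum_nonneg fun j _ => hc j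
  rcases (hβ i).eq_or_lt with hβi | hβi
  · have hfree : ∑ j ∈ Si, c j = 0 := sum_eq_zero fun j hj => by
      have hj_aff := (mem_filter.mp (hS (filter_subset _ _ hj))).2
      rw [hSi j hj, ← hβi] at hj_aff
      exact hj_aff.resolve_left (not_not.mpr rfl)
    rw [← hβi, hfree]
    linarith
  · have hdev : B ∪ T ⊆ affordable ag c β :=
      union_subset ((filter_subset _ _).trans hS) fun j hj =>
        mem_filter.mpr ⟨mem_univ j, Or.inl (by rw [hTi j hj]; exact hβi.ne')⟩
    have hsplit : B ∪ Si = S := by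
      rw [union_comm]; exact filter_union_filter_not_eq _ S
    have hno_gain := (hmax _ hdev).trans_eq (congrArg (potential ag f c β) hsplit.symm)
    rw [potential_union_of_agent_eq hB hTi, potential_union_of_agent_eq hB hSi] at hno_gain
    have hscaled : β i * f (B ∪ T) - β i * f (B ∪ Si) ≤ ∑ j ∈ T, c j - ∑ j ∈ Si, c j := by
      rw [← mul_sub, ← le_div_iff₀' hβi, sub_div]
      linarith
    linarith

theorem exists_isPureNash_forall_potential_le (hβ : ∀ i, 0 ≤ β i) (hc : ∀ j, 0 ≤ c j) :
    ∃ S, IsPureNash ag f c β S ∧ ∀ T ⊆ affordable ag c β, potential ag f c β T ≤ f S := by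
  obtain ⟨S, hS, hmax⟩ := (affordable ag c β).powerset.exists_max_image
    (potential ag f c β) ⟨∅, empty_mem_powerset _⟩
  have hmax' : ∀ T ⊆ affordable ag c β, potential ag f c β T ≤ potential ag f c β S :=
    fun T hT => hmax T (mem_powerset.mpr hT)
  refine ⟨S, isPureNash_of_forall_potential_le hβ hc (mem_powerset.mp hS) hmax', fun T hT => ?_⟩
  exact (hmax' T hT).trans (sub_le_self _ (sum_nonneg fun j _ => div_nonneg (hc j) (hβ _)))

end PotentialGame

lemma sum_marginal_le_of_xos {κ : Type*} [DecidableEq ι] (ag : V → ι) {f : Finset V → ℝ}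
    (w : κ → V → ℝ) (hmax : ∀ S : Finset V, ∃ l, f S = ∑ j ∈ S, w l j)
    (hub : ∀ (S : Finset V) (l : κ), ∑ j ∈ S, w l j ≤ f S) (N : Finset ι) (S : Finset V) :
    ∑ i ∈ N, (f S - f (S.filter (fun j => ag j ≠ i))) ≤ f (S.filter (fun j => ag j ∈ N)) := by
  obtain ⟨l, hl⟩ := hmax S
  have hmarginal : ∀ i, f S - f (S.filter (fun j => ag j ≠ i))
      ≤ ∑ j ∈ S.filter (fun j => ag j = i), w l j := fun i => by
    have := sum_filter_add_sum_filter_not S (fun j => ag j = i) (w l)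
    linarith [hub (S.filter (fun j => ag j ≠ i)) l]
  calc ∑ i ∈ N, (f S - f (S.filter (fun j => ag j ≠ i)))
      ≤ ∑ i ∈ N, ∑ j ∈ S.filter (fun j => ag j = i), w l j := sum_le_sum fun i _ => hmarginal i
    _ = ∑ j ∈ S.filter (fun j => ag j ∈ N), w l j := sum_fiberwise_eq_sum_filter _ _ _ _
    _ ≤ f (S.filter (fun j => ag j ∈ N)) := hub _ l

lemma sum_filter_mem_div_eq_inv_mul [DecidableEq ι] {ag : V → ι} {c : V → ℝ} {α β : ι → ℝ}
    {γ : ℝ} {N : Finset ι} (hβ : ∀ i ∈ N, β i = γ * α i) (S : Finset V) :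
    ∑ j ∈ S.filter (fun j => ag j ∈ N), c j / β (ag j)
      = γ⁻¹ * ∑ i ∈ N, (∑ j ∈ S.filter (fun j => ag j = i), c j) / α i := by
  rw [← sum_fiberwise_eq_sum_filter, mul_sum]
  refine sum_congr rfl fun i hi => ?_
  rw [div_eq_inv_mul, mul_sum, mul_sum]
  refine sum_congr rfl fun j hj => ?_
  rw [(mem_filter.mp hj).2, hβ i hi, div_eq_mul_inv, mul_inv]
  ring

section DropoutStability

variable [Fintype V] [DecidableEq ι]

def IsDropoutStable (ag : V → ι) (f : Finset V → ℝ) (c : V → ℝ) (α : ι → ℝ)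
    (D : Finset V → ℝ) : Prop :=
  ∀ i, ∑ S, D S * (α i * f S - ∑ j ∈ S.filter (fun j => ag j = i), c j)
    ≥ ∑ S, D S * (α i * f (S.filter (fun j => ag j ≠ i)))

variable {ag : V → ι} {f : Finset V → ℝ} {c : V → ℝ} {α : ι → ℝ} {D : Finset V → ℝ}

namespace IsDropoutStable

lemma expected_cost_le (hstable : IsDropoutStable ag f c α D) (i : ι) :
    ∑ S, D S * ∑ j ∈ S.filter (fun j => ag j = i), c j
      ≤ α i * ∑ S, D S * (f S - f (S.filter (fun j => ag j ≠ i))) := by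
  have h := hstable i
  simp only [mul_sub, sum_sub_distrib, mul_sum, mul_left_comm (α i)] at h ⊢
  linarith

lemma cost_eq_zero (hstable : IsDropoutStable ag f c α D) (hD : ∀ S, 0 ≤ D S)
    (hc : ∀ j, 0 ≤ c j) {i : ι} (hαi : α i = 0) {S : Finset V} (hS : D S ≠ 0) {j : V}
    (hj : j ∈ S) (hji : ag j = i) : c j = 0 := by
  have hnonneg : ∀ S ∈ (univ : Finset (Finset V)),
      0 ≤ D S * ∑ j ∈ S.filter (fun j => ag j = i), c j :=
    fun S _ => mul_nonneg (hD S) (sum_nonneg fun j _ => hc j)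
  have hzero := hstable.expected_cost_le i
  rw [hαi, zero_mul] at hzero
  have hterm := (sum_eq_zero_iff_of_nonneg hnonneg).mp
    (le_antisymm hzero (sum_nonneg hnonneg)) S (mem_univ S)
  have hcost := (mul_eq_zero.mp hterm).resolve_left hS
  exact (sum_eq_zero_iff_of_nonneg fun j _ => hc j).mp hcost j (mem_filter.mpr ⟨hj, hji⟩)

/-- For `α i = 0` the left side is `0` by the convention `x / 0 = 0`. -/
lemma expected_cost_div_le (hstable : IsDropoutStable ag f c α D) (hD : ∀ S, 0 ≤ D S)
    (hmono : ∀ S T : Finset V, S ⊆ T → f S ≤ f T) {i : ι} (hαi : 0 ≤ α i) :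
    ∑ S, D S * ((∑ j ∈ S.filter (fun j => ag j = i), c j) / α i)
      ≤ ∑ S, D S * (f S - f (S.filter (fun j => ag j ≠ i))) := by
  rcases hαi.eq_or_lt with hαi | hαi
  · simp only [← hαi, div_zero, mul_zero, sum_const_zero]
    exact sum_nonneg fun S _ =>
      mul_nonneg (hD S) (sub_nonneg.mpr (hmono _ _ (filter_subset _ _)))
  · simp only [← mul_div_assoc, ← sum_div]
    rw [div_le_iff₀' hαi]
    exact hstable.expected_cost_le i

lemma sum_expected_cost_div_le_of_xos {κ : Type*} (hstable : IsDropoutStable ag f c α D)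
    (hD : ∀ S, 0 ≤ D S) (hα : ∀ i, 0 ≤ α i) (hmono : ∀ S T : Finset V, S ⊆ T → f S ≤ f T)
    (w : κ → V → ℝ) (hmax : ∀ S : Finset V, ∃ l, f S = ∑ j ∈ S, w l j)
    (hub : ∀ (S : Finset V) (l : κ), ∑ j ∈ S, w l j ≤ f S) (N : Finset ι) :
    ∑ S, D S * ∑ i ∈ N, (∑ j ∈ S.filter (fun j => ag j = i), c j) / α i
      ≤ ∑ S, D S * f (S.filter (fun j => ag j ∈ N)) :=
  calc ∑ S, D S * ∑ i ∈ N, (∑ j ∈ S.filter (fun j => ag j = i), c j) / α i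
      = ∑ i ∈ N, ∑ S, D S * ((∑ j ∈ S.filter (fun j => ag j = i), c j) / α i) := by
        simp only [mul_sum]; exact sum_comm
    _ ≤ ∑ i ∈ N, ∑ S, D S * (f S - f (S.filter (fun j => ag j ≠ i))) :=
        sum_le_sum fun i _ => hstable.expected_cost_div_le hD hmono (hα i)
    _ = ∑ S, D S * ∑ i ∈ N, (f S - f (S.filter (fun j => ag j ≠ i))) := by
        simp only [mul_sum]; exact sum_comm
    _ ≤ ∑ S, D S * f (S.filter (fun j => ag j ∈ N)) :=
        sum_le_sum fun S _ => mul_le_mul_of_nonneg_left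
          (sum_marginal_le_of_xos ag w hmax hub N S) (hD S)

end IsDropoutStable

end DropoutStability

end ContractGame

theorem scaling_for_existence_general (n k : ℕ) (V : Type*) [Fintype V] [DecidableEq V]
    (ag : V → Fin n) (f : Finset V → ℝ)
    (hmono : ∀ S T : Finset V, S ⊆ T → f S ≤ f T)
    -- XOS structure
    (w : Fin k → V → ℝ)
    (hmax : ∀ S : Finset V, ∃ l : Fin k, f S = ∑ j ∈ S, w l j)
    (hub : ∀ (S : Finset V) (l : Fin k), ∑ j ∈ S, w l j ≤ f S)
    -- costs and contract
    (c : V → ℝ) (hc : ∀ j, 0 ≤ c j)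
    (α : Fin n → ℝ) (hα : ∀ i, 0 ≤ α i ∧ α i ≤ 1)
    -- distribution D, dropout-stable w.r.t. α
    (D : Finset V → ℝ) (hD : ∀ S, 0 ≤ D S) (hDsum : ∑ S : Finset V, D S = 1)
    (hstable : ∀ i : Fin n,
      ∑ S : Finset V, D S * (α i * f S - ∑ j ∈ S.filter (fun j => ag j = i), c j)
        ≥ ∑ S : Finset V, D S * (α i * f (S.filter (fun j => ag j ≠ i))))
    (N' : Finset (Fin n)) (γ : ℝ) (hγ : 1 < γ)
    (α' : Fin n → ℝ) (hα' : ∀ i, α' i = if i ∈ N' then γ * α i else 0) :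
    ∃ S' : Finset V,
      (∀ i : Fin n, ∀ Ti ⊆ univ.filter (fun j => ag j = i),
        α' i * f ((S'.filter (fun j => ag j ≠ i)) ∪ (S'.filter (fun j => ag j = i)))
            - ∑ j ∈ S'.filter (fun j => ag j = i), c j
          ≥ α' i * f ((S'.filter (fun j => ag j ≠ i)) ∪ Ti) - ∑ j ∈ Ti, c j)
      ∧ f S' ≥ (1 - 1/γ) * ∑ S : Finset V, D S * f (S.filter (fun j => ag j ∈ N')) := by
  have hDstable : IsDropoutStable ag f c α D := hstable
  have hγ0 : 0 < γ := zero_lt_one.trans hγ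
  have hα'0 : ∀ i, 0 ≤ α' i := fun i => by
    rw [hα' i]; split_ifs
    exacts [mul_nonneg hγ0.le (hα i).1, le_rfl]
  obtain ⟨S', hNash, hS'⟩ := exists_isPureNash_forall_potential_le (f := f) hα'0 hc
  refine ⟨S', hNash, ?_⟩
  have hrestrict : ∀ S, D S ≠ 0 → S.filter (fun j => ag j ∈ N') ⊆ affordable ag c α' := by
    intro S hS j hj
    obtain ⟨hjS, hjN⟩ := mem_filter.mp hj
    refine mem_filter.mpr ⟨mem_univ j, ?_⟩
    by_cases hαj : α (ag j) = 0
    · exact Or.inr (hDstable.cost_eq_zero hD hc hαj hS hjS rfl)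
    · exact Or.inl (by rw [hα' _, if_pos hjN]; exact mul_ne_zero hγ0.ne' hαj)
  have havg := sum_mul_le_of_forall_ne_zero (fun S _ => hD S) hDsum
    fun S _ hS => hS' _ (hrestrict S hS)
  have hcost := hDstable.sum_expected_cost_div_le_of_xos hD (fun i => (hα i).1) hmono
    w hmax hub N'
  have hweight : ∀ S : Finset V, ∑ j ∈ S.filter (fun j => ag j ∈ N'), c j / α' (ag j)
      = γ⁻¹ * ∑ i ∈ N', (∑ j ∈ S.filter (fun j => ag j = i), c j) / α i :=
    sum_filter_mem_div_eq_inv_mul fun i hi => by rw [hα' i, if_pos hi]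
  simp only [potential, hweight, mul_sub, sum_sub_distrib, mul_left_comm _ γ⁻¹, ← mul_sum]
    at havg
  have hcost_scaled := mul_le_mul_of_nonneg_left hcost (inv_nonneg.mpr hγ0.le)
  rw [one_div]
  linarith

/-- Scaling-for-Existence Lemma: For an XOS reward `f`, nonnegative additive
costs, contract `α ∈ [0,1]^n`, and a dropout-stable distribution `D` w.r.t. `α`: for any
subset of agents `N'` and `γ > 1`, setting `α'_i = γ α_i` on `N'` and `0` elsewhere, there
exists a pure Nash equilibrium `S'` of `α'` with
`f(S') ≥ (1 − 1/γ) · E_{S∼D}[f(⋃_{i∈N'} S_i)]`. -/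
theorem scaling_for_existence (n k : ℕ) (V : Type*) [Fintype V] [DecidableEq V]
    (ag : V → Fin n) (f : Finset V → ℝ)
    (hf0 : f ∅ = 0)
    (hnn : ∀ S : Finset V, 0 ≤ f S)
    (hmono : ∀ S T : Finset V, S ⊆ T → f S ≤ f T)
    -- XOS structure
    (w : Fin k → V → ℝ)
    (hw : ∀ (l : Fin k) (j : V), 0 ≤ w l j)
    (hmax : ∀ S : Finset V, ∃ l : Fin k, f S = ∑ j ∈ S, w l j)
    (hub : ∀ (S : Finset V) (l : Fin k), ∑ j ∈ S, w l j ≤ f S)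
    -- costs and contract
    (c : V → ℝ) (hc : ∀ j, 0 ≤ c j)
    (α : Fin n → ℝ) (hα : ∀ i, 0 ≤ α i ∧ α i ≤ 1)
    -- distribution D, dropout-stable w.r.t. α
    (D : Finset V → ℝ) (hD : ∀ S, 0 ≤ D S) (hDsum : ∑ S : Finset V, D S = 1)
    (hstable : ∀ i : Fin n,
      ∑ S : Finset V, D S * (α i * f S - ∑ j ∈ S.filter (fun j => ag j = i), c j)
        ≥ ∑ S : Finset V, D S * (α i * f (S.filter (fun j => ag j ≠ i))))
    (N' : Finset (Fin n)) (γ : ℝ) (hγ : 1 < γ)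
    (α' : Fin n → ℝ) (hα' : ∀ i, α' i = if i ∈ N' then γ * α i else 0) :
    ∃ S' : Finset V,
      (∀ i : Fin n, ∀ Ti ⊆ univ.filter (fun j => ag j = i),
        α' i * f ((S'.filter (fun j => ag j ≠ i)) ∪ (S'.filter (fun j => ag j = i)))
            - ∑ j ∈ S'.filter (fun j => ag j = i), c j
          ≥ α' i * f ((S'.filter (fun j => ag j ≠ i)) ∪ Ti) - ∑ j ∈ Ti, c j)
      ∧ f S' ≥ (1 - 1/γ) * ∑ S : Finset V, D S * f (S.filter (fun j => ag j ∈ N')) :=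
  scaling_for_existence_general n k V ag f hmono w hmax hub c hc α hα D hD hDsum hstable N' γ hγ α'
    hα'
end

section
/- Let f be XOS on finite A partitioned into A_1,...,A_n, let α ∈ [0,1]^n and let D be a dropout-stable distribution w.r.t. α. Then for any N' ⊆ {1,...,n}, E_{S∼D}[ f(⋃_{i∈N'} S_i) − ∑_{i∈N'} c(S_i)/α_i ] ≥ 0 (with c/0 := ∞ for c > 0, 0/0 := 0; the expression is finite on the support of D). -/
open Finset

/-! An XOS valuation is the pointwise maximum of the additive valuations `w l`, so the loss
`f S - f (S_{-i})` from dropping agent `i` is at most the `w l`-weight of `S_i` for the weight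
vector `l` attaining `f S`; summed over `i ∈ N'` this is at most `f (S_{N'})`. Dropout-stability,
divided by `α i`, says that the expected loss of each agent is at least its expected scaled cost
`c(S_i) / α i`. Summing over `i ∈ N'` and combining the two bounds gives the claim. -/

section XOS

variable {V : Type*} {k : ℕ} {f : Finset V → ℝ} {w : Fin k → V → ℝ}

theorem monotone_of_xos (hw : ∀ l j, 0 ≤ w l j) (hmax : ∀ S, ∃ l, f S = ∑ j ∈ S, w l j)
    (hub : ∀ S l, ∑ j ∈ S, w l j ≤ f S) : Monotone f := by
  intro T S hTS
  obtain ⟨l, hl⟩ := hmax T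
  calc f T = ∑ j ∈ T, w l j := hl
    _ ≤ ∑ j ∈ S, w l j := sum_le_sum_of_subset_of_nonneg hTS fun j _ _ => hw l j
    _ ≤ f S := hub S l

theorem sub_filter_not_le_sum_filter (hub : ∀ S l, ∑ j ∈ S, w l j ≤ f S) {S : Finset V} {l : Fin k}
    (hl : f S = ∑ j ∈ S, w l j) (p : V → Prop) [DecidablePred p] :
    f S - f (S.filter fun j => ¬ p j) ≤ ∑ j ∈ S.filter p, w l j := by
  have hsplit := sum_filter_add_sum_filter_not S p (w l)
  linarith [hub (S.filter fun j => ¬ p j) l]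

theorem sum_sub_filter_ne_le_of_xos {ι : Type*} [DecidableEq ι]
    (hmax : ∀ S, ∃ l, f S = ∑ j ∈ S, w l j) (hub : ∀ S l, ∑ j ∈ S, w l j ≤ f S)
    (ag : V → ι) (N' : Finset ι) (S : Finset V) :
    ∑ i ∈ N', (f S - f (S.filter fun j => ag j ≠ i)) ≤ f (S.filter fun j => ag j ∈ N') := by
  obtain ⟨l, hl⟩ := hmax S
  calc ∑ i ∈ N', (f S - f (S.filter fun j => ag j ≠ i))
      ≤ ∑ i ∈ N', ∑ j ∈ S.filter (fun j => ag j = i), w l j :=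
        sum_le_sum fun i _ => sub_filter_not_le_sum_filter hub hl (fun j => ag j = i)
    _ = ∑ j ∈ S.filter (fun j => ag j ∈ N'), w l j := sum_fiberwise_eq_sum_filter _ _ _ _
    _ ≤ f (S.filter fun j => ag j ∈ N') := hub _ l

end XOS

/-- For `a = 0` the junk value `C x / 0 = 0` is harmless because `g ≥ 0`. -/
theorem sum_mul_sub_div_nonneg {Ω : Type*} [Fintype Ω] {D g C : Ω → ℝ} {a : ℝ} (ha : 0 ≤ a)
    (hD : ∀ x, 0 ≤ D x) (hg : ∀ x, 0 ≤ g x) (h : 0 ≤ ∑ x, D x * (a * g x - C x)) :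
    0 ≤ ∑ x, D x * (g x - C x / a) := by
  rcases ha.eq_or_lt with rfl | hpos
  · simpa only [div_zero, sub_zero] using sum_nonneg fun x _ => mul_nonneg (hD x) (hg x)
  · have hscale : ∑ x, D x * (g x - C x / a) = a⁻¹ * ∑ x, D x * (a * g x - C x) := by
      rw [mul_sum]
      refine sum_congr rfl fun x _ => ?_
      field_simp
    rw [hscale]
    exact mul_nonneg (inv_nonneg.mpr ha) h

theorem dropout_stable_expected_potential_nonneg_general (n k : ℕ) (V : Type*) [Fintype V] [DecidableEq V]
    (ag : V → Fin n) (f : Finset V → ℝ)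
    (w : Fin k → V → ℝ)
    (hw : ∀ (l : Fin k) (j : V), 0 ≤ w l j)
    (hmax : ∀ S : Finset V, ∃ l : Fin k, f S = ∑ j ∈ S, w l j)
    (hub : ∀ (S : Finset V) (l : Fin k), ∑ j ∈ S, w l j ≤ f S)
    (c : V → ℝ)
    (α : Fin n → ℝ) (hα : ∀ i, 0 ≤ α i ∧ α i ≤ 1)
    (D : Finset V → ℝ) (hD : ∀ S, 0 ≤ D S)
    (hstable : ∀ i : Fin n,
      ∑ S : Finset V, D S * (α i * f S - ∑ j ∈ S.filter (fun j => ag j = i), c j)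
        ≥ ∑ S : Finset V, D S * (α i * f (S.filter (fun j => ag j ≠ i)))) :
    ∀ N' : Finset (Fin n),
      0 ≤ ∑ S : Finset V, D S *
        (f (S.filter (fun j => ag j ∈ N'))
          - ∑ i ∈ N', (∑ j ∈ S.filter (fun j => ag j = i), c j) / α i) := by
  intro N'
  have hmono := monotone_of_xos hw hmax hub
  have hagent : ∀ i, 0 ≤ ∑ S : Finset V, D S * (f S - f (S.filter fun j => ag j ≠ i)
      - (∑ j ∈ S.filter (fun j => ag j = i), c j) / α i) := by
    intro i
    refine sum_mul_sub_div_nonneg (hα i).1 hD (fun S => sub_nonneg.mpr (hmono (filter_subset _ S))) ?_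
    have := sub_nonneg.mpr (hstable i)
    rw [← sum_sub_distrib] at this
    exact this.trans_eq (sum_congr rfl fun S _ => by ring)
  calc 0 ≤ ∑ i ∈ N', ∑ S : Finset V, D S * (f S - f (S.filter fun j => ag j ≠ i)
        - (∑ j ∈ S.filter (fun j => ag j = i), c j) / α i) := sum_nonneg fun i _ => hagent i
    _ = ∑ S : Finset V, D S * (∑ i ∈ N', (f S - f (S.filter fun j => ag j ≠ i))
        - ∑ i ∈ N', (∑ j ∈ S.filter (fun j => ag j = i), c j) / α i) := by
      rw [sum_comm]
      simp only [← mul_sum, ← sum_sub_distrib]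
    _ ≤ _ := by
      gcongr with S
      · exact hD S
      · exact sum_sub_filter_ne_le_of_xos hmax hub ag N' S

/-- For XOS `f` and a dropout-stable distribution `D` w.r.t. `α`,
for any subset of agents `N'`, `E_{S∼D}[f(⋃_{i∈N'} S_i) − ∑_{i∈N'} c(S_i)/α_i] ≥ 0`.
(Real division; dropout-stability forces `c(S_i) = 0` on the support whenever `α_i = 0`,
so the Lean convention `c/0 = 0` agrees with the paper's conventions here.) -/
theorem dropout_stable_expected_potential_nonneg (n k : ℕ) (V : Type*) [Fintype V] [DecidableEq V]
    (ag : V → Fin n) (f : Finset V → ℝ)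
    (hf0 : f ∅ = 0)
    (hnn : ∀ S : Finset V, 0 ≤ f S)
    (w : Fin k → V → ℝ)
    (hw : ∀ (l : Fin k) (j : V), 0 ≤ w l j)
    (hmax : ∀ S : Finset V, ∃ l : Fin k, f S = ∑ j ∈ S, w l j)
    (hub : ∀ (S : Finset V) (l : Fin k), ∑ j ∈ S, w l j ≤ f S)
    (c : V → ℝ) (hc : ∀ j, 0 ≤ c j)
    (α : Fin n → ℝ) (hα : ∀ i, 0 ≤ α i ∧ α i ≤ 1)
    (D : Finset V → ℝ) (hD : ∀ S, 0 ≤ D S) (hDsum : ∑ S : Finset V, D S = 1)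
    (hstable : ∀ i : Fin n,
      ∑ S : Finset V, D S * (α i * f S - ∑ j ∈ S.filter (fun j => ag j = i), c j)
        ≥ ∑ S : Finset V, D S * (α i * f (S.filter (fun j => ag j ≠ i)))) :
    ∀ N' : Finset (Fin n),
      0 ≤ ∑ S : Finset V, D S *
        (f (S.filter (fun j => ag j ∈ N'))
          - ∑ i ∈ N', (∑ j ∈ S.filter (fun j => ag j = i), c j) / α i) :=
  dropout_stable_expected_potential_nonneg_general n k V ag f w hw hmax hub c α hα D hD hstable
end

section
/- Scaling-for-Robustness Lemma: Let f be monotone submodular on finite A partitioned into A_1,...,A_n, with additive costs c_j ≥ 0. Let ε > 0, γ > 1, α ∈ [0,1]^n, and let D be a dropout-stable distribution with respect to α. Then for every coarse-correlated equilibrium D† with respect to the contract γα + ε·(1,...,1): E_{S†∼D†}[f(S†)] ≥ (1/2)(1 − 1/γ) · E_{S∼D}[f(S)]. -/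
/-!
Fix an agent `i` and let `T ∼ D` be drawn independently of `S† ∼ D†`. Deviating to `T_i`
is not profitable in the CCE, and by dropout stability
`E[c(T_i)] ≤ α_i E[f(T) − f(T_{-i})]`; as `α_i ≤ β_i / γ`, dividing by `β_i` gives
`E f(S†_{-i} ∪ T_i) ≤ E f(S†) + γ⁻¹ E[f(T) − f(T_{-i})]`.
Summing over the agents, submodularity bounds the left side from below by
`E f(T) + (n − 2) E f(S†)`, and the sum of the marginals `f(T) − f(T_{-i})` by `f(T)`,
so `E f(T) + (n − 2) E f(S†) ≤ n E f(S†) + γ⁻¹ E f(T)`.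
-/

open Finset

def Submodular {V : Type*} [DecidableEq V] (f : Finset V → ℝ) : Prop :=
  ∀ S T, f (S ∪ T) + f (S ∩ T) ≤ f S + f T

section Submodular

variable {V ι : Type*} [DecidableEq V] {f : Finset V → ℝ}

theorem Submodular.marginal_antitone (hmono : Monotone f) (hsub : Submodular f)
    {X Y : Finset V} (Z : Finset V) (hXY : X ⊆ Y) :
    f (Y ∪ Z) - f Y ≤ f (X ∪ Z) - f X := by
  have h := hsub (X ∪ Z) Y
  rw [union_right_comm, union_eq_right.2 hXY] at h
  have : f X ≤ f ((X ∪ Z) ∩ Y) := hmono (subset_inter subset_union_left hXY)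
  linarith

theorem Submodular.marginal_biUnion_le_sum (hmono : Monotone f) (hsub : Submodular f)
    [DecidableEq ι] (X : Finset V) (I : Finset ι) (T : ι → Finset V) :
    f (X ∪ I.biUnion T) - f X ≤ ∑ i ∈ I, (f (X ∪ T i) - f X) := by
  induction I using Finset.induction_on with
  | empty => simp
  | insert a I ha ih =>
    have h := hsub.marginal_antitone hmono (I.biUnion T)
      (subset_union_left : X ⊆ X ∪ T a)
    rw [union_assoc] at h
    rw [biUnion_insert, sum_insert ha]
    linarith

theorem Submodular.sum_marginal_filter_le (hmono : Monotone f) (hsub : Submodular f)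
    [DecidableEq ι] (ag : V → ι) (S : Finset V) (I : Finset ι) :
    ∑ i ∈ I, (f S - f {j ∈ S | ag j ≠ i}) ≤ f S - f {j ∈ S | ag j ∉ I} := by
  induction I using Finset.induction_on with
  | empty => simp
  | insert a I ha ih =>
    have h := hsub.marginal_antitone hmono {j ∈ S | ag j = a}
      (X := {j ∈ S | ag j ∉ insert a I}) (Y := {j ∈ S | ag j ≠ a})
      (fun j => by simp +contextual)
    have hX :
        {j ∈ S | ag j ∉ insert a I} ∪ {j ∈ S | ag j = a} = {j ∈ S | ag j ∉ I} := by
      ext j; by_cases hj : ag j = a <;> simp [hj, ha]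
    have hY : {j ∈ S | ag j ≠ a} ∪ {j ∈ S | ag j = a} = S := by
      rw [← filter_or]; exact filter_true_of_mem fun j _ => em' _
    rw [hX, hY] at h
    rw [sum_insert ha]
    linarith

variable [Fintype ι] [DecidableEq ι]

theorem Submodular.sum_marginal_filter_le_self (hmono : Monotone f) (hsub : Submodular f)
    (hf0 : 0 ≤ f ∅) (ag : V → ι) (S : Finset V) :
    ∑ i, (f S - f {j ∈ S | ag j ≠ i}) ≤ f S := by
  have h := hsub.sum_marginal_filter_le hmono ag S univ
  simp only [mem_univ, not_true_eq_false, filter_false] at h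
  linarith

theorem Submodular.add_le_sum_filter_ne_union_filter_eq (hmono : Monotone f)
    (hsub : Submodular f) (hf0 : 0 ≤ f ∅) (ag : V → ι) (S T : Finset V) :
    f T + ((Fintype.card ι : ℝ) - 2) * f S
      ≤ ∑ i, f ({j ∈ S | ag j ≠ i} ∪ {j ∈ T | ag j = i}) := by
  have hunion : f (S ∪ T) - f S ≤ ∑ i, (f (S ∪ {j ∈ T | ag j = i}) - f S) := by
    have h := hsub.marginal_biUnion_le_sum hmono S univ fun i => {j ∈ T | ag j = i}
    rwa [biUnion_filter_eq_of_maps_to fun j _ => mem_univ (ag j)] at h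
  have hdrop := hsub.sum_marginal_filter_le_self hmono hf0 ag S
  have hexchange : ∀ i, f (S ∪ {j ∈ T | ag j = i}) - f S
      ≤ f ({j ∈ S | ag j ≠ i} ∪ {j ∈ T | ag j = i}) - f {j ∈ S | ag j ≠ i} :=
    fun i => hsub.marginal_antitone hmono _ (filter_subset _ S)
  have hsum := sum_le_sum fun i (_ : i ∈ univ) => hexchange i
  have hT : f T ≤ f (S ∪ T) := hmono subset_union_right
  simp only [sum_sub_distrib, sum_const, card_univ, nsmul_eq_mul] at hunion hdrop hsum
  linarith

end Submodular

section Expectation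

variable {Ω ι : Type*} [Fintype Ω] (D : Ω → ℝ)

def expectation (g : Ω → ℝ) : ℝ := ∑ ω, D ω * g ω

theorem expectation_add (g h : Ω → ℝ) :
    expectation D (fun ω => g ω + h ω) = expectation D g + expectation D h := by
  simp only [expectation, mul_add, sum_add_distrib]

theorem expectation_sub (g h : Ω → ℝ) :
    expectation D (fun ω => g ω - h ω) = expectation D g - expectation D h := by
  simp only [expectation, mul_sub, sum_sub_distrib]

theorem expectation_const_mul (a : ℝ) (g : Ω → ℝ) :
    expectation D (fun ω => a * g ω) = a * expectation D g := by
  simp only [expectation, mul_sum, mul_left_comm]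

theorem expectation_sum (I : Finset ι) (g : ι → Ω → ℝ) :
    expectation D (fun ω => ∑ i ∈ I, g i ω) = ∑ i ∈ I, expectation D (g i) := by
  simp only [expectation, mul_sum]
  exact sum_comm

variable {D}

theorem expectation_const (hD : ∑ ω, D ω = 1) (a : ℝ) : expectation D (fun _ => a) = a := by
  rw [expectation, ← sum_mul, hD, one_mul]

theorem expectation_mono (hD : ∀ ω, 0 ≤ D ω) {g h : Ω → ℝ}
    (hgh : ∀ ω, g ω ≤ h ω) :
    expectation D g ≤ expectation D h :=
  sum_le_sum fun ω _ => mul_le_mul_of_nonneg_left (hgh ω) (hD ω)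

end Expectation

theorem expectation_deviation_le {V ι : Type*} [Fintype V] [DecidableEq V] [DecidableEq ι]
    (ag : V → ι) {f : Finset V → ℝ} (hmono : Monotone f)
    {c : V → ℝ} (hc : ∀ j, 0 ≤ c j)
    {D D' : Finset V → ℝ} (hD : ∀ S, 0 ≤ D S) (hDsum : ∑ S, D S = 1)
    (hD' : ∀ S, 0 ≤ D' S) (hD'sum : ∑ S, D' S = 1)
    {i : ι} {a b γ : ℝ} (hγ : 0 < γ) (hb : 0 < b) (hab : γ * a ≤ b)
    (hstable : expectation D (fun S => a * f S - ∑ j ∈ S with ag j = i, c j)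
      ≥ expectation D (fun S => a * f {j ∈ S | ag j ≠ i}))
    (hCCE : ∀ Ti ⊆ univ.filter (fun j => ag j = i),
      expectation D' (fun S => b * f S - ∑ j ∈ S with ag j = i, c j)
        ≥ expectation D' (fun S => b * f ({j ∈ S | ag j ≠ i} ∪ Ti) - ∑ j ∈ Ti, c j)) :
    expectation D (fun T : Finset V =>
        expectation D' (fun S => f ({j ∈ S | ag j ≠ i} ∪ {j ∈ T | ag j = i})))
      ≤ expectation D' f
        + γ⁻¹ * (expectation D f - expectation D (fun S => f {j ∈ S | ag j ≠ i})) := by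
  have hdeviation : ∀ T : Finset V,
      b * expectation D' (fun S => f ({j ∈ S | ag j ≠ i} ∪ {j ∈ T | ag j = i}))
        ≤ b * expectation D' f + ∑ j ∈ T with ag j = i, c j := by
    intro T
    have h := hCCE _ (filter_subset_filter _ (subset_univ T))
    have hcost : 0 ≤ expectation D' fun S => ∑ j ∈ S with ag j = i, c j :=
      sum_nonneg fun S _ => mul_nonneg (hD' S) (sum_nonneg fun j _ => hc j)
    rw [expectation_sub, expectation_sub, expectation_const hD'sum, expectation_const_mul,
      expectation_const_mul] at h
    linarith
  have havg := expectation_mono hD hdeviation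
  rw [expectation_add, expectation_const_mul, expectation_const hDsum] at havg
  rw [expectation_sub, expectation_const_mul, expectation_const_mul] at hstable
  set P := expectation D f
  set Q := expectation D fun S => f {j ∈ S | ag j ≠ i}
  have hQP : Q ≤ P := expectation_mono hD fun S => hmono (filter_subset _ S)
  have ha : a * (P - Q) ≤ b * γ⁻¹ * (P - Q) :=
    mul_le_mul_of_nonneg_right ((le_mul_inv_iff₀ hγ).2 (by linarith)) (sub_nonneg.2 hQP)
  refine le_of_mul_le_mul_left ?_ hb
  linarith

theorem scaling_for_robustness_general (n : ℕ) (V : Type*) [Fintype V] [DecidableEq V]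
    (ag : V → Fin n) (f : Finset V → ℝ)
    (hf0 : f ∅ = 0)
    (hmono : ∀ S T : Finset V, S ⊆ T → f S ≤ f T)
    (hsub : ∀ S T : Finset V, f (S ∪ T) + f (S ∩ T) ≤ f S + f T)
    (c : V → ℝ) (hc : ∀ j, 0 ≤ c j)
    (ε : ℝ) (hε : 0 < ε) (γ : ℝ) (hγ : 1 < γ)
    (α : Fin n → ℝ) (hα : ∀ i, 0 ≤ α i ∧ α i ≤ 1)
    -- D, dropout-stable w.r.t. α
    (D : Finset V → ℝ) (hD : ∀ S, 0 ≤ D S) (hDsum : ∑ S : Finset V, D S = 1)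
    (hstable : ∀ i : Fin n,
      ∑ S : Finset V, D S * (α i * f S - ∑ j ∈ S.filter (fun j => ag j = i), c j)
        ≥ ∑ S : Finset V, D S * (α i * f (S.filter (fun j => ag j ≠ i))))
    -- D†, a CCE w.r.t. γα + ε𝟙
    (D' : Finset V → ℝ) (hD' : ∀ S, 0 ≤ D' S) (hD'sum : ∑ S : Finset V, D' S = 1)
    (hCCE : ∀ i : Fin n, ∀ Ti ⊆ univ.filter (fun j => ag j = i),
      ∑ S : Finset V, D' S *
          ((γ * α i + ε) * f S - ∑ j ∈ S.filter (fun j => ag j = i), c j)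
        ≥ ∑ S : Finset V, D' S *
            ((γ * α i + ε) * f ((S.filter (fun j => ag j ≠ i)) ∪ Ti) - ∑ j ∈ Ti, c j)) :
    ∑ S : Finset V, D' S * f S ≥ (1/2) * (1 - 1/γ) * ∑ S : Finset V, D S * f S := by
  have hf : Monotone f := fun S T => hmono S T
  have hγ0 : 0 < γ := by linarith
  have hagent := fun i => expectation_deviation_le ag hf hc hD hDsum hD' hD'sum hγ0
    (add_pos_of_nonneg_of_pos (mul_nonneg hγ0.le (hα i).1) hε)
    (le_add_of_nonneg_right hε.le) (hstable i) (hCCE i)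
  have hexchange := expectation_mono hD fun T => expectation_mono hD' fun S =>
    Submodular.add_le_sum_filter_ne_union_filter_eq hf hsub hf0.ge ag S T
  have hmarginal := expectation_mono hD fun S =>
    Submodular.sum_marginal_filter_le_self hf hsub hf0.ge ag S
  simp only [expectation_sum, expectation_add, expectation_const_mul, expectation_const hDsum,
    expectation_const hD'sum, expectation_sub, Fintype.card_fin] at hexchange hmarginal
  have hsum := sum_le_sum fun i (_ : i ∈ univ) => hagent i
  rw [sum_add_distrib, ← mul_sum, sum_const, card_univ, Fintype.card_fin, nsmul_eq_mul] at hsum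
  have hscaled := mul_le_mul_of_nonneg_left hmarginal (inv_nonneg.2 hγ0.le)
  change expectation D' f ≥ 1 / 2 * (1 - 1 / γ) * expectation D f
  rw [one_div γ]
  linarith

/-- Scaling-for-Robustness Lemma: For monotone submodular `f`, `ε > 0`,
`γ > 1`, a dropout-stable distribution `D` w.r.t. `α`, and any coarse-correlated
equilibrium `D†` of the contract `γα + ε𝟙`:
`E_{S†∼D†}[f(S†)] ≥ (1/2)(1 − 1/γ) E_{S∼D}[f(S)]`. -/
theorem scaling_for_robustness (n : ℕ) (V : Type*) [Fintype V] [DecidableEq V]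
    (ag : V → Fin n) (f : Finset V → ℝ)
    (hf0 : f ∅ = 0)
    (hnn : ∀ S : Finset V, 0 ≤ f S)
    (hmono : ∀ S T : Finset V, S ⊆ T → f S ≤ f T)
    (hsub : ∀ S T : Finset V, f (S ∪ T) + f (S ∩ T) ≤ f S + f T)
    (c : V → ℝ) (hc : ∀ j, 0 ≤ c j)
    (ε : ℝ) (hε : 0 < ε) (γ : ℝ) (hγ : 1 < γ)
    (α : Fin n → ℝ) (hα : ∀ i, 0 ≤ α i ∧ α i ≤ 1)
    -- D, dropout-stable w.r.t. α
    (D : Finset V → ℝ) (hD : ∀ S, 0 ≤ D S) (hDsum : ∑ S : Finset V, D S = 1)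
    (hstable : ∀ i : Fin n,
      ∑ S : Finset V, D S * (α i * f S - ∑ j ∈ S.filter (fun j => ag j = i), c j)
        ≥ ∑ S : Finset V, D S * (α i * f (S.filter (fun j => ag j ≠ i))))
    -- D†, a CCE w.r.t. γα + ε𝟙
    (D' : Finset V → ℝ) (hD' : ∀ S, 0 ≤ D' S) (hD'sum : ∑ S : Finset V, D' S = 1)
    (hCCE : ∀ i : Fin n, ∀ Ti ⊆ univ.filter (fun j => ag j = i),
      ∑ S : Finset V, D' S *
          ((γ * α i + ε) * f S - ∑ j ∈ S.filter (fun j => ag j = i), c j)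
        ≥ ∑ S : Finset V, D' S *
            ((γ * α i + ε) * f ((S.filter (fun j => ag j ≠ i)) ∪ Ti) - ∑ j ∈ Ti, c j)) :
    ∑ S : Finset V, D' S * f S ≥ (1/2) * (1 - 1/γ) * ∑ S : Finset V, D S * f S :=
  scaling_for_robustness_general n V ag f hf0 hmono hsub c hc ε hε γ hγ α hα D hD hDsum hstable D'
    hD' hD'sum hCCE
end

section
/- For binary actions and supermodular monotone f: if a distribution D over subsets of [n] satisfies the dropout condition E_{S∼D}[α_i (f(S) − f(S \ {i})) − c_i 1[i ∈ S]] ≥ 0 for agent i, and S' = ⋃_{S ∈ supp(D)} S contains i, then α_i · f(i | S' \ {i}) ≥ c_i. -/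
/-!
Supermodularity makes the marginal value of `i` largest on the largest set containing the
support, so every summand of the dropout condition is bounded by `D S · (α_i f(i | S' \ {i}) - c_i)`
when `i ∈ S` and by `0` otherwise. The resulting sum is `α_i f(i | S' \ {i}) - c_i` times the
probability that `i` is played, which is positive since `i ∈ S'`.
-/

open Finset
open scoped Classical

theorem nonneg_of_sum_mul_ite_nonneg {ι : Type*} (s : Finset ι) (w : ι → ℝ)
    (hw : ∀ j ∈ s, 0 ≤ w j) (p : ι → Prop) [DecidablePred p] (x : ℝ)
    (h : 0 ≤ ∑ j ∈ s, w j * if p j then x else 0) {j₀ : ι} (hj₀ : j₀ ∈ s) (hpj₀ : p j₀)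
    (hwj₀ : w j₀ ≠ 0) : 0 ≤ x := by
  have hsum : ∑ j ∈ s, w j * (if p j then x else 0) = x * ∑ j ∈ s with p j, w j := by
    rw [mul_sum, sum_filter]
    exact sum_congr rfl fun j _ => by split_ifs <;> ring
  have hpos : 0 < ∑ j ∈ s with p j, w j :=
    (lt_of_le_of_ne (hw j₀ hj₀) hwj₀.symm).trans_le <|
      single_le_sum (fun j hj => hw j (mem_filter.1 hj).1) (mem_filter.2 ⟨hj₀, hpj₀⟩)
  exact nonneg_of_mul_nonneg_left (hsum ▸ h) hpos

section Supermodular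

variable {α : Type*} [DecidableEq α] {f : Finset α → ℝ}

theorem sub_erase_le_of_supermodular
    (hsuper : ∀ (S T : Finset α) (j : α), S ⊆ T → j ∉ T →
      f (insert j S) - f S ≤ f (insert j T) - f T)
    {S T : Finset α} {i : α} (hST : S ⊆ T) (hi : i ∈ S) :
    f S - f (S.erase i) ≤ f (insert i (T.erase i)) - f (T.erase i) := by
  simpa only [insert_erase hi] using
    hsuper _ _ i (erase_subset_erase i hST) (notMem_erase i T)

theorem dropout_payoff_le_of_supermodular
    (hsuper : ∀ (S T : Finset α) (j : α), S ⊆ T → j ∉ T →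
      f (insert j S) - f S ≤ f (insert j T) - f T)
    {S T : Finset α} (hST : S ⊆ T) (i : α) {a : ℝ} (ha : 0 ≤ a) (c : ℝ) :
    a * (f S - f (S.erase i)) - (if i ∈ S then c else 0) ≤
      if i ∈ S then a * (f (insert i (T.erase i)) - f (T.erase i)) - c else 0 := by
  by_cases hi : i ∈ S
  · simp only [if_pos hi, sub_le_sub_iff_right]
    exact mul_le_mul_of_nonneg_left (sub_erase_le_of_supermodular hsuper hST hi) ha
  · simp [hi]

end Supermodular

theorem supermodular_binary_dropout_marginal_general (n : ℕ) (f : Finset (Fin n) → ℝ)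
    (hsuper : ∀ (S T : Finset (Fin n)) (j : Fin n), S ⊆ T → j ∉ T →
      f (insert j S) - f S ≤ f (insert j T) - f T)
    (i : Fin n) (αi ci : ℝ) (hαi : 0 ≤ αi ∧ αi ≤ 1)
    (D : Finset (Fin n) → ℝ) (hD : ∀ S, 0 ≤ D S)
    (hdrop : 0 ≤ ∑ S : Finset (Fin n),
      D S * (αi * (f S - f (S.erase i)) - (if i ∈ S then ci else 0)))
    (S' : Finset (Fin n))
    (hS' : S' = univ.filter (fun j => ∃ S : Finset (Fin n), D S ≠ 0 ∧ j ∈ S))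
    (hiS' : i ∈ S') :
    ci ≤ αi * (f (insert i (S'.erase i)) - f (S'.erase i)) := by
  obtain ⟨S₀, hDS₀, hiS₀⟩ : ∃ S₀, D S₀ ≠ 0 ∧ i ∈ S₀ := by simpa [hS'] using hiS'
  have hsupp : ∀ S, D S ≠ 0 → S ⊆ S' := fun S hS j hj => by
    simpa [hS'] using ⟨S, hS, hj⟩
  have hbound : 0 ≤ ∑ S : Finset (Fin n), D S *
      if i ∈ S then αi * (f (insert i (S'.erase i)) - f (S'.erase i)) - ci else 0 := by
    refine hdrop.trans (sum_le_sum fun S _ => ?_)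
    by_cases hS : D S = 0
    · simp [hS]
    exact mul_le_mul_of_nonneg_left
      (dropout_payoff_le_of_supermodular hsuper (hsupp S hS) i hαi.1 ci) (hD S)
  linarith [nonneg_of_sum_mul_ite_nonneg univ D (fun S _ => hD S) (i ∈ ·) _ hbound
    (mem_univ S₀) hiS₀ hDS₀]

/-- Binary actions, supermodular monotone `f`. If `D` satisfies the dropout
condition for agent `i` and `i` belongs to the union `S'` of the support of `D`, then
`α_i · f(i | S' \ {i}) ≥ c_i`. -/
theorem supermodular_binary_dropout_marginal (n : ℕ) (f : Finset (Fin n) → ℝ)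
    (hnn : ∀ S : Finset (Fin n), 0 ≤ f S)
    (hmono : ∀ S T : Finset (Fin n), S ⊆ T → f S ≤ f T)
    (hsuper : ∀ (S T : Finset (Fin n)) (j : Fin n), S ⊆ T → j ∉ T →
      f (insert j S) - f S ≤ f (insert j T) - f T)
    (i : Fin n) (αi ci : ℝ) (hαi : 0 ≤ αi ∧ αi ≤ 1) (hci : 0 ≤ ci)
    (D : Finset (Fin n) → ℝ) (hD : ∀ S, 0 ≤ D S) (hDsum : ∑ S : Finset (Fin n), D S = 1)
    (hdrop : 0 ≤ ∑ S : Finset (Fin n),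
      D S * (αi * (f S - f (S.erase i)) - (if i ∈ S then ci else 0)))
    (S' : Finset (Fin n))
    (hS' : S' = univ.filter (fun j => ∃ S : Finset (Fin n), D S ≠ 0 ∧ j ∈ S))
    (hiS' : i ∈ S') :
    ci ≤ αi * (f (insert i (S'.erase i)) - f (S'.erase i)) :=
  supermodular_binary_dropout_marginal_general n f hsuper i αi ci hαi D hD hdrop S' hS' hiS'
end

section
/- Supermodular local best-response lemma: In the multi-agent model with supermodular monotone f on finite A partitioned into A_1,...,A_n, let D be a correlated equilibrium of contract α, and let T = ⋃_{S ∈ supp(D)} S, T_i = T ∩ A_i. Fix agent i and any S_{-i} ⊆ A \ A_i with T \ A_i ⊆ S_{-i}. Then there exists S_i ⊆ A_i with T_i ⊆ S_i such that S_i ∈ argmax_{X_i ⊆ A_i} [α_i f(X_i ∪ S_{-i}) − c(X_i)]. -/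
open Finset
open scoped Classical

/-
Let `g X = α_i f(X ∪ S_{-i}) - c(X)` and let `X` be an inclusion-maximal maximiser of `g` over
subsets of `A_i`; consider the deviation `S_i ↦ S_i ∩ X`. For `S` in the support of `D` we have
`S \ A_i ⊆ S_{-i}`, so by supermodularity the gain of `S_i` over `S_i ∩ X` is at most
`g(X ∪ S_i) - g(X) ≤ 0`. The equilibrium condition makes the expected gain nonnegative, hence
`g(X ∪ S_i) = g(X)` on the support, and maximality of `X` forces `S_i ⊆ X`.
-/

def Supermodular {V β : Type*} [DecidableEq V] [Sub β] [LE β] (f : Finset V → β) : Prop :=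
  ∀ (S T : Finset V) (j : V), S ⊆ T → j ∉ T → f (insert j S) - f S ≤ f (insert j T) - f T

theorem Supermodular.sub_le_sub_union {V β : Type*} [DecidableEq V] [AddCommGroup β]
    [PartialOrder β] [IsOrderedAddMonoid β] {f : Finset V → β} (hsuper : Supermodular f)
    {U U' : Finset V} (hUU' : U ⊆ U') {W : Finset V} (hW : Disjoint W U') :
    f (U ∪ W) - f U ≤ f (U' ∪ W) - f U' := by
  induction W using Finset.induction_on with
  | empty => simp
  | @insert j W hjW ih =>
    obtain ⟨hjU', hWU'⟩ := disjoint_insert_left.mp hW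
    calc f (U ∪ insert j W) - f U
        = (f (insert j (U ∪ W)) - f (U ∪ W)) + (f (U ∪ W) - f U) := by
          rw [union_insert, sub_add_sub_cancel]
      _ ≤ (f (insert j (U' ∪ W)) - f (U' ∪ W)) + (f (U' ∪ W) - f U') :=
          add_le_add (hsuper _ _ j (union_subset_union hUU' subset_rfl) (by simp [hjU', hjW]))
            (ih hWU')
      _ = f (U' ∪ insert j W) - f U' := by rw [union_insert, sub_add_sub_cancel]

/-- Playing `Y` against `B` instead of `Y ∩ X` gains at most what adding `Y` to `X` gains
against the larger profile `B'`. -/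
theorem Supermodular.payoff_sub_payoff_inter_le {V : Type*} [DecidableEq V] {f : Finset V → ℝ}
    (hsuper : Supermodular f) {α : ℝ} (hα : 0 ≤ α) (c : V → ℝ) {B B' X Y : Finset V} (hB : B ⊆ B')
    (hYB' : Disjoint Y B') :
    (α * f (B ∪ Y) - ∑ j ∈ Y, c j) - (α * f (B ∪ (Y ∩ X)) - ∑ j ∈ Y ∩ X, c j)
      ≤ (α * f (X ∪ Y ∪ B') - ∑ j ∈ X ∪ Y, c j) - (α * f (X ∪ B') - ∑ j ∈ X, c j) := by
  have hf := hsuper.sub_le_sub_union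
    (union_subset_union hB inter_subset_right : B ∪ (Y ∩ X) ⊆ B' ∪ X)
    (disjoint_union_right.mpr ⟨hYB'.mono_left sdiff_subset, sdiff_disjoint⟩ :
      Disjoint (Y \ X) (B' ∪ X))
  have hBY : B ∪ (Y ∩ X) ∪ Y \ X = B ∪ Y := by
    rw [union_assoc]
    exact congrArg (B ∪ ·) (sup_inf_sdiff Y X)
  have hXY : B' ∪ X ∪ Y \ X = X ∪ Y ∪ B' := by
    rw [union_assoc, union_sdiff_self_eq_union, union_comm]
  rw [hBY, hXY, union_comm B' X] at hf
  have hcY := sum_inter_add_sum_sdiff Y X c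
  have hcXY : ∑ j ∈ X ∪ Y, c j = ∑ j ∈ X, c j + ∑ j ∈ Y \ X, c j := by
    rw [← union_sdiff_self_eq_union, sum_union disjoint_sdiff]
  have := mul_le_mul_of_nonneg_left hf hα
  linarith

theorem Supermodular.deviation_to_inter_gain_le {V ι : Type*} [DecidableEq V] [DecidableEq ι]
    {f : Finset V → ℝ} (hsuper : Supermodular f) {α : ℝ} (hα : 0 ≤ α) (c : V → ℝ)
    (ag : V → ι) (i : ι) {S Sm : Finset V} (X : Finset V)
    (hS : S.filter (fun j => ag j ≠ i) ⊆ Sm) (hSm : ∀ j ∈ Sm, ag j ≠ i) :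
    (α * f S - ∑ j ∈ S.filter (fun j => ag j = i), c j)
      - (α * f (S.filter (fun j => ag j ≠ i) ∪ (S.filter (fun j => ag j = i) ∩ X))
          - ∑ j ∈ S.filter (fun j => ag j = i) ∩ X, c j)
      ≤ (α * f (X ∪ S.filter (fun j => ag j = i) ∪ Sm)
          - ∑ j ∈ X ∪ S.filter (fun j => ag j = i), c j)
        - (α * f (X ∪ Sm) - ∑ j ∈ X, c j) := by
  have h := hsuper.payoff_sub_payoff_inter_le hα c (X := X) (Y := S.filter fun j => ag j = i) hS
    (disjoint_left.mpr fun j hj hjSm => hSm j hjSm (mem_filter.mp hj).2)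
  rwa [union_comm, filter_union_filter_not_eq] at h

theorem exists_maximal_argmax_powerset {V β : Type*} [LinearOrder β] (A : Finset V)
    (g : Finset V → β) :
    ∃ X ⊆ A, (∀ Y ⊆ A, g Y ≤ g X) ∧ ∀ Y ⊆ A, X ⊆ Y → g X ≤ g Y → Y = X := by
  set M := A.powerset.filter fun X => ∀ Y ⊆ A, g Y ≤ g X
  obtain ⟨X₀, hX₀A, hX₀⟩ := A.powerset.exists_max_image g ⟨∅, by simp⟩
  have hM : M.Nonempty :=
    ⟨X₀, mem_filter.mpr ⟨hX₀A, fun Y hY => hX₀ Y (mem_powerset.mpr hY)⟩⟩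
  obtain ⟨X, hXM, hXmax⟩ := exists_maximal hM
  obtain ⟨hXA, hX⟩ := mem_filter.mp hXM
  refine ⟨X, mem_powerset.mp hXA, hX, fun Y hYA hXY hgXY => ?_⟩
  have hYM : Y ∈ M :=
    mem_filter.mpr ⟨mem_powerset.mpr hYA, fun Z hZ => (hX Z hZ).trans hgXY⟩
  exact (hXmax hYM hXY).antisymm hXY

theorem eq_zero_of_sum_mul_nonneg_of_nonpos {ι : Type*} {s : Finset ι} {w a : ι → ℝ}
    (hw : ∀ k ∈ s, 0 ≤ w k) (ha : ∀ k ∈ s, a k ≤ 0) (hsum : 0 ≤ ∑ k ∈ s, w k * a k)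
    {k : ι} (hk : k ∈ s) (hwk : w k ≠ 0) : a k = 0 := by
  have hterm : ∀ k ∈ s, w k * a k ≤ 0 :=
    fun k hk => mul_nonpos_of_nonneg_of_nonpos (hw k hk) (ha k hk)
  have hzero := (sum_eq_zero_iff_of_nonpos hterm).mp (le_antisymm (sum_nonpos hterm) hsum) k hk
  exact (mul_eq_zero.mp hzero).resolve_left hwk

theorem supermodular_local_best_response_general (n : ℕ) (V : Type*) [Fintype V] [DecidableEq V]
    (ag : V → Fin n) (f : Finset V → ℝ)
    (hsuper : ∀ (S T : Finset V) (j : V), S ⊆ T → j ∉ T →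
      f (insert j S) - f S ≤ f (insert j T) - f T)
    (c : V → ℝ)
    (α : Fin n → ℝ) (hα : ∀ i, 0 ≤ α i ∧ α i ≤ 1)
    (D : Finset V → ℝ) (hD : ∀ S, 0 ≤ D S)
    -- correlated equilibrium: no agent gains by any deviation map π_i
    (hCE : ∀ (i : Fin n) (π : Finset V → Finset V),
      (∀ X : Finset V, π X ⊆ univ.filter (fun j => ag j = i)) →
      ∑ S : Finset V, D S * (α i * f S - ∑ j ∈ S.filter (fun j => ag j = i), c j)
        ≥ ∑ S : Finset V, D S *
            (α i * f ((S.filter (fun j => ag j ≠ i)) ∪ π (S.filter (fun j => ag j = i)))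
              - ∑ j ∈ π (S.filter (fun j => ag j = i)), c j))
    (T : Finset V)
    (hT : T = univ.filter (fun j => ∃ S : Finset V, D S ≠ 0 ∧ j ∈ S))
    (i : Fin n) (Sm : Finset V)
    (hSm1 : ∀ j ∈ Sm, ag j ≠ i)
    (hSm2 : T.filter (fun j => ag j ≠ i) ⊆ Sm) :
    ∃ Si : Finset V, Si ⊆ univ.filter (fun j => ag j = i)
      ∧ T.filter (fun j => ag j = i) ⊆ Si
      ∧ ∀ Xi ⊆ univ.filter (fun j => ag j = i),
          α i * f (Xi ∪ Sm) - ∑ j ∈ Xi, c j ≤ α i * f (Si ∪ Sm) - ∑ j ∈ Si, c j := by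
  set Ai := univ.filter fun j => ag j = i
  set g : Finset V → ℝ := fun X => α i * f (X ∪ Sm) - ∑ j ∈ X, c j
  obtain ⟨X, hXA, hXopt, hXmax⟩ := exists_maximal_argmax_powerset Ai g
  have hown : ∀ S : Finset V, S.filter (fun j => ag j = i) ⊆ Ai :=
    fun S => filter_subset_filter _ (subset_univ S)
  have hexp : 0 ≤ ∑ S : Finset V, D S * (g (X ∪ S.filter (fun j => ag j = i)) - g X) := by
    refine (sub_nonneg.mpr (hCE i (· ∩ X) fun _ => inter_subset_right.trans hXA)).trans ?_
    rw [← sum_sub_distrib]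
    refine sum_le_sum fun S _ => ?_
    rcases eq_or_ne (D S) 0 with hS | hS
    · simp [hS]
    have hST : S ⊆ T := fun j hj => by rw [hT]; simpa using ⟨S, hS, hj⟩
    rw [← mul_sub]
    refine mul_le_mul_of_nonneg_left ?_ (hD S)
    exact Supermodular.deviation_to_inter_gain_le hsuper (hα i).1 c ag i X
      ((filter_subset_filter _ hST).trans hSm2) hSm1
  have hsupp : ∀ S : Finset V, D S ≠ 0 → S.filter (fun j => ag j = i) ⊆ X := by
    intro S hS
    have hgX := eq_zero_of_sum_mul_nonneg_of_nonpos (fun S _ => hD S)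
      (fun S _ => sub_nonpos.mpr (hXopt _ (union_subset hXA (hown S)))) hexp (mem_univ S) hS
    exact union_eq_left.mp <|
      hXmax _ (union_subset hXA (hown S)) subset_union_left (sub_eq_zero.mp hgX).ge
  refine ⟨X, hXA, fun j hj => ?_, hXopt⟩
  obtain ⟨hjT, hji⟩ := mem_filter.mp hj
  obtain ⟨S, hS, hjS⟩ := (mem_filter.mp (hT ▸ hjT)).2
  exact hsupp S hS (mem_filter.mpr ⟨hjS, hji⟩)

/-- Supermodular local best-response lemma: If `D` is a correlated
equilibrium of `α` with supermodular monotone `f`, `T` is the union of the support of `D`,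
and agent `i` faces any profile `S_{-i}` of the others containing `T \ A_i`, then agent `i`
has a best response containing `T_i`. -/
theorem supermodular_local_best_response (n : ℕ) (V : Type*) [Fintype V] [DecidableEq V]
    (ag : V → Fin n) (f : Finset V → ℝ)
    (hnn : ∀ S : Finset V, 0 ≤ f S)
    (hmono : ∀ S T : Finset V, S ⊆ T → f S ≤ f T)
    (hsuper : ∀ (S T : Finset V) (j : V), S ⊆ T → j ∉ T →
      f (insert j S) - f S ≤ f (insert j T) - f T)
    (c : V → ℝ) (hc : ∀ j, 0 ≤ c j)
    (α : Fin n → ℝ) (hα : ∀ i, 0 ≤ α i ∧ α i ≤ 1)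
    (D : Finset V → ℝ) (hD : ∀ S, 0 ≤ D S) (hDsum : ∑ S : Finset V, D S = 1)
    -- correlated equilibrium: no agent gains by any deviation map π_i
    (hCE : ∀ (i : Fin n) (π : Finset V → Finset V),
      (∀ X : Finset V, π X ⊆ univ.filter (fun j => ag j = i)) →
      ∑ S : Finset V, D S * (α i * f S - ∑ j ∈ S.filter (fun j => ag j = i), c j)
        ≥ ∑ S : Finset V, D S *
            (α i * f ((S.filter (fun j => ag j ≠ i)) ∪ π (S.filter (fun j => ag j = i)))
              - ∑ j ∈ π (S.filter (fun j => ag j = i)), c j))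
    (T : Finset V)
    (hT : T = univ.filter (fun j => ∃ S : Finset V, D S ≠ 0 ∧ j ∈ S))
    (i : Fin n) (Sm : Finset V)
    (hSm1 : ∀ j ∈ Sm, ag j ≠ i)
    (hSm2 : T.filter (fun j => ag j ≠ i) ⊆ Sm) :
    ∃ Si : Finset V, Si ⊆ univ.filter (fun j => ag j = i)
      ∧ T.filter (fun j => ag j = i) ⊆ Si
      ∧ ∀ Xi ⊆ univ.filter (fun j => ag j = i),
          α i * f (Xi ∪ Sm) - ∑ j ∈ Xi, c j ≤ α i * f (Si ∪ Sm) - ∑ j ∈ Si, c j :=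
  supermodular_local_best_response_general n V ag f hsuper c α hα D hD hCE T hT i Sm hSm1 hSm2
end

section
/- Any set function f on ground set A = {x,y} ∪ B (B finite, disjoint from {x,y}) satisfying, for all T ≠ ∅, 2 + 2·1[|T ∩ {x,y}| ≥ 1] + 1[|T ∩ {x,y}| ≥ 2] + |T ∩ B|/√n ≤ f(T) ≤ 4 + 2·1[|T ∩ {x,y}| ≥ 1] + 1[|T ∩ {x,y}| ≥ 2] + |T ∩ B|/√n (with f(∅) = 0 and n ≥ 1) is subadditive. -/
/-!
Write `g T = 2·1[k ≥ 1] + 1[k ≥ 2] + |T ∩ B|/√n` with `k = |T ∩ {x,y}|`, so that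
`2 + g ≤ f ≤ 4 + g` on nonempty sets. Both summands of `g` are subadditive, hence for nonempty
`S, T` we get `f (S ∪ T) ≤ 4 + g (S ∪ T) ≤ (2 + g S) + (2 + g T) ≤ f S + f T`; the slack `4 - 2`
of the sandwich is exactly absorbed by the two lower bounds.
-/

open Finset

section Sandwich

variable {V : Type*} [DecidableEq V]

theorem le_add_of_sandwich {A : Finset V} {f g : Finset V → ℝ} {c C : ℝ} (hC : C ≤ 2 * c)
    (hg : ∀ S T, g (S ∪ T) ≤ g S + g T) (hf0 : f ∅ = 0)
    (hlow : ∀ T ⊆ A, T ≠ ∅ → c + g T ≤ f T) (hhigh : ∀ T ⊆ A, T ≠ ∅ → f T ≤ C + g T) :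
    ∀ S ⊆ A, ∀ T ⊆ A, f (S ∪ T) ≤ f S + f T := by
  intro S hS T hT
  rcases S.eq_empty_or_nonempty with rfl | hSne
  · simp [hf0]
  rcases T.eq_empty_or_nonempty with rfl | hTne
  · simp [hf0]
  have hST := hhigh (S ∪ T) (union_subset hS hT) (hSne.mono subset_union_left).ne_empty
  linarith [hlow S hS hSne.ne_empty, hlow T hT hTne.ne_empty, hg S T]

theorem card_union_inter_le (S T C : Finset V) : #((S ∪ T) ∩ C) ≤ #(S ∩ C) + #(T ∩ C) := by
  rw [union_inter_distrib_right]
  exact card_union_le _ _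

theorem card_union_inter_div_le (S T C : Finset V) {r : ℝ} (hr : 0 ≤ r) :
    (#((S ∪ T) ∩ C) : ℝ) / r ≤ #(S ∩ C) / r + #(T ∩ C) / r := by
  rw [← add_div]
  gcongr
  exact_mod_cast card_union_inter_le S T C

end Sandwich

def stepWeight (k : ℕ) : ℝ :=
  2 * (if 1 ≤ k then 1 else 0) + (if 2 ≤ k then 1 else 0)

theorem stepWeight_le_add {a b c : ℕ} (h : a ≤ b + c) :
    stepWeight a ≤ stepWeight b + stepWeight c := by
  unfold stepWeight
  split_ifs <;> norm_num <;> omega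

theorem sandwich_subadditive_general (V : Type*) [DecidableEq V] (x y : V)
    (B : Finset V)
    (n : ℕ)
    (f : Finset V → ℝ) (hf0 : f ∅ = 0)
    (hlow : ∀ T ⊆ insert x (insert y B), T ≠ ∅ →
      2 + 2 * (if 1 ≤ (T ∩ ({x, y} : Finset V)).card then (1:ℝ) else 0)
        + (if 2 ≤ (T ∩ ({x, y} : Finset V)).card then (1:ℝ) else 0)
        + ((T ∩ B).card : ℝ) / Real.sqrt n ≤ f T)
    (hhigh : ∀ T ⊆ insert x (insert y B), T ≠ ∅ →
      f T ≤ 4 + 2 * (if 1 ≤ (T ∩ ({x, y} : Finset V)).card then (1:ℝ) else 0)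
        + (if 2 ≤ (T ∩ ({x, y} : Finset V)).card then (1:ℝ) else 0)
        + ((T ∩ B).card : ℝ) / Real.sqrt n) :
    ∀ S ⊆ insert x (insert y B), ∀ T ⊆ insert x (insert y B),
      f (S ∪ T) ≤ f S + f T := by
  let g : Finset V → ℝ := fun T => stepWeight #(T ∩ {x, y}) + #(T ∩ B) / Real.sqrt n
  have hg : ∀ S T, g (S ∪ T) ≤ g S + g T := fun S T => by
    have hstep := stepWeight_le_add (card_union_inter_le S T {x, y})
    have hB := card_union_inter_div_le S T B (Real.sqrt_nonneg n)
    simp only [g]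
    linarith
  refine le_add_of_sandwich (c := 2) (C := 4) (g := g) (by norm_num) hg hf0 ?_ ?_
  · intro T hT hne
    simp only [g, stepWeight]
    linarith [hlow T hT hne]
  · intro T hT hne
    simp only [g, stepWeight]
    linarith [hhigh T hT hne]

/-- Any set function on `{x,y} ∪ B` sandwiched (on nonempty subsets of the
ground set) between `2 + 2·1[k≥1] + 1[k≥2] + |T∩B|/√n` and `4 + 2·1[k≥1] + 1[k≥2] + |T∩B|/√n`,
where `k = |T ∩ {x,y}|`, and with `f(∅) = 0`, is subadditive on subsets of the ground set. -/
theorem sandwich_subadditive (V : Type*) [DecidableEq V] (x y : V) (hxy : x ≠ y)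
    (B : Finset V) (hx : x ∉ B) (hy : y ∉ B)
    (n : ℕ) (hn : 1 ≤ n)
    (f : Finset V → ℝ) (hf0 : f ∅ = 0)
    (hlow : ∀ T ⊆ insert x (insert y B), T ≠ ∅ →
      2 + 2 * (if 1 ≤ (T ∩ ({x, y} : Finset V)).card then (1:ℝ) else 0)
        + (if 2 ≤ (T ∩ ({x, y} : Finset V)).card then (1:ℝ) else 0)
        + ((T ∩ B).card : ℝ) / Real.sqrt n ≤ f T)
    (hhigh : ∀ T ⊆ insert x (insert y B), T ≠ ∅ →
      f T ≤ 4 + 2 * (if 1 ≤ (T ∩ ({x, y} : Finset V)).card then (1:ℝ) else 0)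
        + (if 2 ≤ (T ∩ ({x, y} : Finset V)).card then (1:ℝ) else 0)
        + ((T ∩ B).card : ℝ) / Real.sqrt n) :
    ∀ S ⊆ insert x (insert y B), ∀ T ⊆ insert x (insert y B),
      f (S ∪ T) ≤ f S + f T :=
  sandwich_subadditive_general V x y B n f hf0 hlow hhigh
end

section
/- Let D be a coarse-correlated equilibrium of contract α* in the multi-agent combinatorial contract model with monotone subadditive f. Suppose agent i satisfies the dropout condition, and let α_i ∈ (α*_i, 1]. If S = (S_i, ∅,...,∅) is a pure Nash equilibrium of the contract that pays α_i to agent i and 0 to the others, then (α_i − α*_i) f(S_i) ≥ (α_i − α*_i) E_{S*∼D}[f(S*_i)] − α*_i E_{S*∼D}[f(S*_{-i})]. -/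
open Finset

/-! Apply the CCE condition with the deviation `T_i = S_i`: by monotonicity the deviation is worth
at least `α*_i f(S_i) − c(S_i)`, and by subadditivity `f(S*) ≤ f(S*_i) + f(S*_{-i})`, so
`α*_i f(S_i) − c(S_i) ≤ α*_i (E f(S*_i) + E f(S*_{-i})) − E c(S*_i)`. The PNE condition, tested
against the random deviation `S*_i`, gives `α_i E f(S*_i) − E c(S*_i) ≤ α_i f(S_i) − c(S_i)`.
Subtracting the first inequality from the second cancels the costs and leaves the claim. -/

section WeightedSum

variable {Ω : Type*} [Fintype Ω] {w g : Ω → ℝ} {x : ℝ}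

theorem le_sum_mul_of_forall_le (hw : ∀ ω, 0 ≤ w ω) (hw1 : ∑ ω, w ω = 1) (h : ∀ ω, x ≤ g ω) :
    x ≤ ∑ ω, w ω * g ω :=
  calc x = ∑ ω, w ω * x := by rw [← sum_mul, hw1, one_mul]
    _ ≤ ∑ ω, w ω * g ω := sum_le_sum fun ω _ => mul_le_mul_of_nonneg_left (h ω) (hw ω)

theorem sum_mul_le_of_forall_le (hw : ∀ ω, 0 ≤ w ω) (hw1 : ∑ ω, w ω = 1) (h : ∀ ω, g ω ≤ x) :
    ∑ ω, w ω * g ω ≤ x :=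
  calc ∑ ω, w ω * g ω ≤ ∑ ω, w ω * x :=
        sum_le_sum fun ω _ => mul_le_mul_of_nonneg_left (h ω) (hw ω)
    _ = x := by rw [← sum_mul, hw1, one_mul]

end WeightedSum

section Deviation

variable {V : Type*} [Fintype V] {f : Finset V → ℝ} {c : V → ℝ}
  {D : Finset V → ℝ} {p : V → Prop} [DecidablePred p] {a : ℝ}

theorem deviation_le_of_coarseCorrelated [DecidableEq V]
    (hmono : ∀ S T : Finset V, S ⊆ T → f S ≤ f T)
    (hsubadd : ∀ S T : Finset V, f (S ∪ T) ≤ f S + f T) (ha : 0 ≤ a)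
    (hD : ∀ S, 0 ≤ D S) (hDsum : ∑ S, D S = 1) {T : Finset V}
    (hCCE : ∑ S, D S * (a * f S - ∑ j ∈ S.filter p, c j)
      ≥ ∑ S, D S * (a * f (S.filter (fun j => ¬ p j) ∪ T) - ∑ j ∈ T, c j)) :
    a * f T - ∑ j ∈ T, c j ≤ a * ∑ S, D S * f (S.filter p)
      + a * ∑ S, D S * f (S.filter (fun j => ¬ p j)) - ∑ S, D S * ∑ j ∈ S.filter p, c j :=
  calc a * f T - ∑ j ∈ T, c j
      ≤ ∑ S, D S * (a * f (S.filter (fun j => ¬ p j) ∪ T) - ∑ j ∈ T, c j) :=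
        le_sum_mul_of_forall_le hD hDsum fun S => by
          gcongr; exact hmono _ _ subset_union_right
    _ ≤ ∑ S, D S * (a * f S - ∑ j ∈ S.filter p, c j) := hCCE
    _ ≤ ∑ S, D S * (a * (f (S.filter p) + f (S.filter (fun j => ¬ p j)))
          - ∑ j ∈ S.filter p, c j) :=
        sum_le_sum fun S _ => mul_le_mul_of_nonneg_left (by
          have := hsubadd (S.filter p) (S.filter (¬ p ·))
          rw [filter_union_filter_not_eq] at this
          gcongr) (hD S)
    _ = _ := by
        rw [mul_sum, mul_sum, ← sum_add_distrib, ← sum_sub_distrib]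
        exact sum_congr rfl fun S _ => by ring

theorem expected_deviation_le_of_bestResponse (hD : ∀ S, 0 ≤ D S) (hDsum : ∑ S, D S = 1)
    {R : Finset V} (hbest : ∀ T ⊆ univ.filter p, a * f R - ∑ j ∈ R, c j ≥ a * f T - ∑ j ∈ T, c j) :
    a * ∑ S, D S * f (S.filter p) - ∑ S, D S * ∑ j ∈ S.filter p, c j ≤ a * f R - ∑ j ∈ R, c j :=
  calc a * ∑ S, D S * f (S.filter p) - ∑ S, D S * ∑ j ∈ S.filter p, c j
      = ∑ S, D S * (a * f (S.filter p) - ∑ j ∈ S.filter p, c j) := by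
        rw [mul_sum, ← sum_sub_distrib]
        exact sum_congr rfl fun S _ => by ring
    _ ≤ a * f R - ∑ j ∈ R, c j :=
        sum_mul_le_of_forall_le hD hDsum fun S =>
          hbest _ (filter_subset_filter p (subset_univ S))

end Deviation

theorem single_agent_scaled_pne_bound_general (n : ℕ) (V : Type*) [Fintype V] [DecidableEq V]
    (ag : V → Fin n) (f : Finset V → ℝ)
    (hmono : ∀ S T : Finset V, S ⊆ T → f S ≤ f T)
    (hsubadd : ∀ S T : Finset V, f (S ∪ T) ≤ f S + f T)
    (c : V → ℝ)
    (αs : Fin n → ℝ) (hαs : ∀ i', 0 ≤ αs i' ∧ αs i' ≤ 1)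
    (D : Finset V → ℝ) (hD : ∀ S, 0 ≤ D S) (hDsum : ∑ S : Finset V, D S = 1)
    -- D is a CCE of α*
    (hCCE : ∀ i' : Fin n, ∀ Ti ⊆ univ.filter (fun j => ag j = i'),
      ∑ S : Finset V, D S * (αs i' * f S - ∑ j ∈ S.filter (fun j => ag j = i'), c j)
        ≥ ∑ S : Finset V, D S *
            (αs i' * f ((S.filter (fun j => ag j ≠ i')) ∪ Ti) - ∑ j ∈ Ti, c j))
    (i : Fin n)
    (αi : ℝ)
    (Si : Finset V) (hSi : ∀ j ∈ Si, ag j = i)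
    -- PNE condition for agent i under the single-agent contract (others take no action)
    (hPNE : ∀ T ⊆ univ.filter (fun j => ag j = i),
      αi * f Si - ∑ j ∈ Si, c j ≥ αi * f T - ∑ j ∈ T, c j) :
    (αi - αs i) * f Si
      ≥ (αi - αs i) * (∑ S : Finset V, D S * f (S.filter (fun j => ag j = i)))
        - αs i * (∑ S : Finset V, D S * f (S.filter (fun j => ag j ≠ i))) := by
  have hSi_sub : Si ⊆ univ.filter (fun j => ag j = i) := fun j hj => by simp [hSi j hj]
  have hcce := deviation_le_of_coarseCorrelated hmono hsubadd (hαs i).1 hD hDsum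
    (hCCE i Si hSi_sub)
  have hpne := expected_deviation_le_of_bestResponse (c := c) hD hDsum hPNE
  linarith

/-- Let `D` be a CCE of `α*` (monotone subadditive `f`), suppose agent `i`
satisfies the dropout condition, and let `α_i ∈ (α*_i, 1]`. If `S_i` (together with all
other agents taking no action) is a PNE of the contract paying `α_i` to agent `i` and `0`
to the others, then
`(α_i − α*_i) f(S_i) ≥ (α_i − α*_i) E[f(S*_i)] − α*_i E[f(S*_{-i})]`. -/
theorem single_agent_scaled_pne_bound (n : ℕ) (V : Type*) [Fintype V] [DecidableEq V]
    (ag : V → Fin n) (f : Finset V → ℝ)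
    (hf0 : f ∅ = 0)
    (hnn : ∀ S : Finset V, 0 ≤ f S)
    (hmono : ∀ S T : Finset V, S ⊆ T → f S ≤ f T)
    (hsubadd : ∀ S T : Finset V, f (S ∪ T) ≤ f S + f T)
    (c : V → ℝ) (hc : ∀ j, 0 ≤ c j)
    (αs : Fin n → ℝ) (hαs : ∀ i', 0 ≤ αs i' ∧ αs i' ≤ 1)
    (D : Finset V → ℝ) (hD : ∀ S, 0 ≤ D S) (hDsum : ∑ S : Finset V, D S = 1)
    -- D is a CCE of α*
    (hCCE : ∀ i' : Fin n, ∀ Ti ⊆ univ.filter (fun j => ag j = i'),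
      ∑ S : Finset V, D S * (αs i' * f S - ∑ j ∈ S.filter (fun j => ag j = i'), c j)
        ≥ ∑ S : Finset V, D S *
            (αs i' * f ((S.filter (fun j => ag j ≠ i')) ∪ Ti) - ∑ j ∈ Ti, c j))
    (i : Fin n)
    -- dropout condition for agent i
    (hdrop : ∑ S : Finset V, D S * (αs i * f S - ∑ j ∈ S.filter (fun j => ag j = i), c j)
      ≥ ∑ S : Finset V, D S * (αs i * f (S.filter (fun j => ag j ≠ i))))
    (αi : ℝ) (hαi : αs i < αi ∧ αi ≤ 1)
    (Si : Finset V) (hSi : ∀ j ∈ Si, ag j = i)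
    -- PNE condition for agent i under the single-agent contract (others take no action)
    (hPNE : ∀ T ⊆ univ.filter (fun j => ag j = i),
      αi * f Si - ∑ j ∈ Si, c j ≥ αi * f T - ∑ j ∈ T, c j) :
    (αi - αs i) * f Si
      ≥ (αi - αs i) * (∑ S : Finset V, D S * f (S.filter (fun j => ag j = i)))
        - αs i * (∑ S : Finset V, D S * f (S.filter (fun j => ag j ≠ i))) :=
  single_agent_scaled_pne_bound_general n V ag f hmono hsubadd c αs hαs D hD hDsum hCCE i αi Si hSi
    hPNE
end

section
/- Unbounded CCE–PNE gap for supermodular rewards: In the instance with agents 1,2 where A_1 = {1,2}, A_2 = {3}, reward f given by f(∅)=0, f({1})=0, f({2})=1, f({3})=0, f({1,2})=5.5, f({1,3})=1, f({2,3})=1, f({1,2,3})=10, and costs c(1)=0.75, c(2)=8.5, c(3)=0.25: (a) no contract α = (α_1, α_2) with α_1 + α_2 < 1 admits a pure Nash equilibrium giving the principal strictly positive utility; (b) under the contract α = (0.925, 1/18), the distribution placing probability 0.8 on the joint action {1,2,3} and 0.2 on ∅ is a coarse-correlated equilibrium, and the principal's expected utility under it equals (1 − 0.925 − 1/18) ·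 0.8 · 10 = 7/45 > 0. -/
/-!
Only the profiles `{2}`, `{1,2}`, `{1,3}`, `{2,3}`, `{1,2,3}` earn positive reward, and none of
them is a pure equilibrium when `α₁ + α₂ < 1`. At `{1,2,3}`, agent 1 prefers both actions to
action 1 alone only if `9 α₁ ≥ 8.5`, and agent 2 keeps action 3 only if `4.5 α₂ ≥ 0.25`, so
`α₁ + α₂ ≥ 17/18 + 1/18 = 1`; at `{1,3}` the same two deviations force `α₁ ≥ 3/4` and
`α₂ ≥ 1/4`; at the remaining three agent 1 pays for action 2 more than its share of the
reward and would rather do nothing.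

Correlation escapes this: the mass `0.2` on `∅` makes agent 1's fixed deviation to action 1
alone pay its cost also when agent 2 is absent, and under `(0.925, 1/18)` each agent is exactly
indifferent between following the distribution and its best fixed deviation.
-/

open Finset

/-- Reward function of Table 4: actions `1, 2, 3` encoded as `0, 1, 2 : Fin 3`.
Agent 1's action set is `{0, 1}`, agent 2's is `{2}`. -/
noncomputable def gapF (S : Finset (Fin 3)) : ℝ :=
  if S = {0, 1, 2} then 10
  else if S = {0, 1} then 5.5
  else if S = {0, 2} then 1
  else if S = {1, 2} then 1
  else if S = {1} then 1
  else 0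

/-- Costs: `c(1) = 0.75`, `c(2) = 8.5`, `c(3) = 0.25`. -/
noncomputable def gapC : Fin 3 → ℝ := ![0.75, 8.5, 0.25]

/-- The distribution placing probability `0.8` on `{1,2,3}` and `0.2` on `∅`. -/
noncomputable def gapD (S : Finset (Fin 3)) : ℝ :=
  if S = {0, 1, 2} then 0.8 else if S = ∅ then 0.2 else 0

theorem Finset.subset_pair_iff_eq {α : Type*} [DecidableEq α] {s : Finset α} {a b : α} :
    s ⊆ {a, b} ↔ s = ∅ ∨ s = {a} ∨ s = {b} ∨ s = {a, b} := by
  rw [← coe_subset, coe_pair, Set.subset_pair_iff_eq]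
  norm_cast

theorem finset_fin_three_cases (S : Finset (Fin 3)) :
    S = ∅ ∨ S = {0} ∨ S = {1} ∨ S = {2} ∨ S = {0, 1} ∨ S = {0, 2} ∨ S = {1, 2} ∨
      S = {0, 1, 2} := by
  revert S; decide

def IsPNE (f : Finset (Fin 3) → ℝ) (c : Fin 3 → ℝ) (α₁ α₂ : ℝ) (S : Finset (Fin 3)) : Prop :=
  (∀ T₁ ⊆ ({0, 1} : Finset (Fin 3)),
      α₁ * f S - ∑ j ∈ S ∩ ({0, 1} : Finset (Fin 3)), c j
        ≥ α₁ * f ((S ∩ ({2} : Finset (Fin 3))) ∪ T₁) - ∑ j ∈ T₁, c j)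
    ∧ (∀ T₂ ⊆ ({2} : Finset (Fin 3)),
      α₂ * f S - ∑ j ∈ S ∩ ({2} : Finset (Fin 3)), c j
        ≥ α₂ * f ((S ∩ ({0, 1} : Finset (Fin 3))) ∪ T₂) - ∑ j ∈ T₂, c j)

def IsCCE (f : Finset (Fin 3) → ℝ) (c : Fin 3 → ℝ) (α₁ α₂ : ℝ) (D : Finset (Fin 3) → ℝ) :
    Prop :=
  (∀ T₁ ⊆ ({0, 1} : Finset (Fin 3)),
      ∑ S : Finset (Fin 3), D S * (α₁ * f S - ∑ j ∈ S ∩ ({0, 1} : Finset (Fin 3)), c j)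
        ≥ (∑ S : Finset (Fin 3), D S * (α₁ * f ((S ∩ ({2} : Finset (Fin 3))) ∪ T₁)))
          - ∑ j ∈ T₁, c j)
    ∧ (∀ T₂ ⊆ ({2} : Finset (Fin 3)),
      ∑ S : Finset (Fin 3), D S * (α₂ * f S - ∑ j ∈ S ∩ ({2} : Finset (Fin 3)), c j)
        ≥ (∑ S : Finset (Fin 3), D S * (α₂ * f ((S ∩ ({0, 1} : Finset (Fin 3))) ∪ T₂)))
          - ∑ j ∈ T₂, c j)

theorem one_le_add_of_isPNE_of_gapF_pos {α₁ α₂ : ℝ} {S : Finset (Fin 3)} (hα₂ : 0 ≤ α₂)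
    (hS : IsPNE gapF gapC α₁ α₂ S) (hpos : 0 < gapF S) : 1 ≤ α₁ + α₂ := by
  obtain ⟨h₁, h₂⟩ := hS
  have drop₁ := h₁ ∅ (empty_subset _)
  have shrink₁ := h₁ {0} (by decide)
  have drop₂ := h₂ ∅ (empty_subset _)
  rcases finset_fin_three_cases S with rfl | rfl | rfl | rfl | rfl | rfl | rfl | rfl <;>
    simp +decide [gapF, gapC] at hpos drop₁ shrink₁ drop₂ <;> linarith

theorem gapF_nonpos_of_isPNE {α₁ α₂ : ℝ} {S : Finset (Fin 3)} (hα₂ : 0 ≤ α₂)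
    (hα : α₁ + α₂ < 1) (hS : IsPNE gapF gapC α₁ α₂ S) : gapF S ≤ 0 :=
  not_lt.1 fun hpos => (one_le_add_of_isPNE_of_gapF_pos hα₂ hS hpos).not_gt hα

theorem sum_gapD_mul (g : Finset (Fin 3) → ℝ) :
    ∑ S, gapD S * g S = 0.8 * g {0, 1, 2} + 0.2 * g ∅ := by
  rw [Fintype.sum_eq_add {0, 1, 2} ∅ (by decide) fun S hS => by simp [gapD, hS.1, hS.2]]
  simp +decide [gapD]

theorem isCCE_gapD : IsCCE gapF gapC 0.925 (1 / 18) gapD := by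
  refine ⟨fun T hT => ?_, fun T hT => ?_⟩ <;> rw [sum_gapD_mul, sum_gapD_mul]
  · rcases Finset.subset_pair_iff_eq.1 hT with rfl | rfl | rfl | rfl <;>
      simp +decide [gapF, gapC] <;> norm_num
  · rcases Finset.subset_singleton_iff.1 hT with rfl | rfl <;>
      simp +decide [gapF, gapC] <;> norm_num

theorem sum_gapD_mul_gapF : ∑ S, gapD S * gapF S = 8 := by
  rw [sum_gapD_mul]
  norm_num +decide [gapF]

/-- (a) in the instance above, no contract `(α₁, α₂) ∈ [0,1]²` with
`α₁ + α₂ < 1` admits a pure Nash equilibrium giving the principal strictly positive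
utility; (b) under the contract `(0.925, 1/18)` the distribution `gapD` is a
coarse-correlated equilibrium, and the principal's expected utility under it equals
`(1 − 0.925 − 1/18) · 0.8 · 10 = 7/45 > 0`. -/
theorem supermodular_unbounded_cce_pne_gap :
    (∀ α₁ α₂ : ℝ, 0 ≤ α₁ → α₁ ≤ 1 → 0 ≤ α₂ → α₂ ≤ 1 → α₁ + α₂ < 1 →
      ∀ S : Finset (Fin 3),
        ((∀ T₁ ⊆ ({0, 1} : Finset (Fin 3)),
            α₁ * gapF S - ∑ j ∈ S ∩ ({0, 1} : Finset (Fin 3)), gapC j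
              ≥ α₁ * gapF ((S ∩ ({2} : Finset (Fin 3))) ∪ T₁) - ∑ j ∈ T₁, gapC j)
          ∧ (∀ T₂ ⊆ ({2} : Finset (Fin 3)),
            α₂ * gapF S - ∑ j ∈ S ∩ ({2} : Finset (Fin 3)), gapC j
              ≥ α₂ * gapF ((S ∩ ({0, 1} : Finset (Fin 3))) ∪ T₂) - ∑ j ∈ T₂, gapC j))
        → (1 - α₁ - α₂) * gapF S ≤ 0)
    ∧
    ((∀ T₁ ⊆ ({0, 1} : Finset (Fin 3)),
        ∑ S : Finset (Fin 3), gapD S *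
            ((0.925 : ℝ) * gapF S - ∑ j ∈ S ∩ ({0, 1} : Finset (Fin 3)), gapC j)
          ≥ (∑ S : Finset (Fin 3), gapD S *
              ((0.925 : ℝ) * gapF ((S ∩ ({2} : Finset (Fin 3))) ∪ T₁)))
            - ∑ j ∈ T₁, gapC j)
      ∧ (∀ T₂ ⊆ ({2} : Finset (Fin 3)),
        ∑ S : Finset (Fin 3), gapD S *
            ((1/18 : ℝ) * gapF S - ∑ j ∈ S ∩ ({2} : Finset (Fin 3)), gapC j)
          ≥ (∑ S : Finset (Fin 3), gapD S *
              ((1/18 : ℝ) * gapF ((S ∩ ({0, 1} : Finset (Fin 3))) ∪ T₂)))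
            - ∑ j ∈ T₂, gapC j)
      ∧ (1 - 0.925 - 1/18 : ℝ) * ∑ S : Finset (Fin 3), gapD S * gapF S = 7/45
      ∧ (0 : ℝ) < 7/45) := by
  refine ⟨fun α₁ α₂ _ _ hα₂ _ hα S hS => ?_, isCCE_gapD.1, isCCE_gapD.2, ?_, by norm_num⟩
  · exact mul_nonpos_of_nonneg_of_nonpos (by linarith) (gapF_nonpos_of_isPNE hα₂ hα hS)
  · rw [sum_gapD_mul_gapF]; norm_num
end
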